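/- arXiv:1605.01176 — 9 statements merged into one kernel-verified Lean document; each statement's English description precedes it below -/
import Mathlib

section
/- For θ ∈ (0,π) and x ∈ ℝ, the function f_θ(x) = (1/(2i)) · log((1 - e^{x - iθ}) / (1 - e^{x + iθ})) (with branch chosen so that 0 < f_θ(x) < π) has derivative f_θ'(x) = sin θ / (2(cosh x - cos θ)), which is strictly positive; hence f_θ is strictly increasing. -/
/-!
Factoring `1 - e^{x ∓ iθ} = e^x sin θ (v ± i)` with `v = (e^{-x} - cos θ) / sin θ` shows that the
defining ratio equals `(v + i) / (v - i) = e^{2iφ}` for `φ = arccot v ∈ (0, π)`. Since `z ↦ e^{2iz}`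
is injective on `(0, π)`, `f_θ = arccot v`, which is differentiated by the chain rule; the derivative
is positive because `cosh x ≥ 1 > cos θ`.
-/

open Real

open Complex (I)
open scoped Complex

theorem pi_div_two_sub_arctan_mem_Ioo (v : ℝ) : π / 2 - arctan v ∈ Set.Ioo 0 π :=
  ⟨by linarith [arctan_lt_pi_div_two v], by linarith [neg_pi_div_two_lt_arctan v]⟩

theorem exp_two_mul_I_pi_div_two_sub_arctan (v : ℝ) :
    cexp (2 * I * ((π / 2 - arctan v : ℝ) : ℂ)) = (v + I) / (v - I) := by
  have hs : (0 : ℝ) < 1 + v ^ 2 := by positivity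
  have hroot : ((√(1 + v ^ 2) : ℝ) : ℂ) ≠ 0 := by exact_mod_cast (sqrt_pos.2 hs).ne'
  have hsq : ((√(1 + v ^ 2) : ℝ) : ℂ) ^ 2 = (v + I) * (v - I) := by
    rw [← Complex.ofReal_pow, sq_sqrt hs.le]; push_cast; linear_combination Complex.I_sq
  have hvI : (v : ℂ) - I ≠ 0 := fun h => by simpa using congrArg Complex.im h
  have hunit : cexp (((π / 2 - arctan v : ℝ) : ℂ) * I) = (v + I) / (√(1 + v ^ 2) : ℝ) := by
    rw [Complex.exp_mul_I, ← Complex.ofReal_cos, ← Complex.ofReal_sin, cos_pi_div_two_sub,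
      sin_pi_div_two_sub, sin_arctan, cos_arctan]
    push_cast; ring
  calc cexp (2 * I * ((π / 2 - arctan v : ℝ) : ℂ))
      = cexp (((π / 2 - arctan v : ℝ) : ℂ) * I) ^ 2 := by
        rw [← Complex.exp_nat_mul]; push_cast; ring_nf
    _ = (v + I) / (v - I) := by
      rw [hunit, div_pow, hsq]; field_simp

theorem eq_of_exp_two_mul_I_eq {a b : ℝ} (ha : a ∈ Set.Ioo 0 π) (hb : b ∈ Set.Ioo 0 π)
    (h : cexp (2 * I * a) = cexp (2 * I * b)) : a = b := by
  -- shift by `π` so that the arguments lie in the strip where `exp` is injective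
  have hshift : ∀ c : ℝ, cexp (2 * I * c) = cexp (((2 * c - π : ℝ) : ℂ) * I) * cexp (π * I) := by
    intro c; rw [← Complex.exp_add]; push_cast; ring_nf
  have him : ∀ c : ℝ, (((2 * c - π : ℝ) : ℂ) * I).im = 2 * c - π := by simp
  rw [hshift, hshift b, mul_left_inj' (Complex.exp_ne_zero _)] at h
  have := congrArg Complex.im <| Complex.exp_inj_of_neg_pi_lt_of_le_pi
    (by rw [him]; linarith [ha.1]) (by rw [him]; linarith [ha.2])
    (by rw [him]; linarith [hb.1]) (by rw [him]; linarith [hb.2]) h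
  rw [him, him] at this
  linarith

theorem one_sub_exp_add_mul_I (x φ : ℝ) :
    1 - cexp (x + φ * I) = rexp x * ((rexp (-x) - cos φ : ℝ) - sin φ * I) := by
  have hinv : (rexp x : ℂ) * (rexp (-x) : ℝ) = 1 := by
    rw [← Complex.ofReal_mul, ← Real.exp_add, add_neg_cancel, Real.exp_zero, Complex.ofReal_one]
  rw [Complex.exp_add, Complex.exp_mul_I, ← Complex.ofReal_exp, ← Complex.ofReal_cos,
    ← Complex.ofReal_sin, Complex.ofReal_sub]
  linear_combination -hinv

theorem add_mul_I_div_sub_mul_I {c s : ℝ} (hs : s ≠ 0) :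
    ((c : ℂ) + s * I) / (c - s * I) = ((c / s : ℝ) + I) / ((c / s : ℝ) - I) := by
  have : (s : ℂ) ≠ 0 := by exact_mod_cast hs
  rw [Complex.ofReal_div, ← mul_div_mul_left _ _ this]
  field_simp

theorem one_sub_exp_div_one_sub_exp {θ : ℝ} (hθ : sin θ ≠ 0) (x : ℝ) :
    (1 - cexp (x - θ * I)) / (1 - cexp (x + θ * I)) =
      (((rexp (-x) - cos θ) / sin θ : ℝ) + I) / (((rexp (-x) - cos θ) / sin θ : ℝ) - I) := by
  have hnum := one_sub_exp_add_mul_I x (-θ)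
  rw [cos_neg, sin_neg, Complex.ofReal_neg, neg_mul, ← sub_eq_add_neg, Complex.ofReal_neg,
    neg_mul, sub_neg_eq_add] at hnum
  rw [hnum, one_sub_exp_add_mul_I, mul_div_mul_left _ _ (by simp),
    add_mul_I_div_sub_mul_I hθ]

/-- `arccot ((e^{-x} - cos θ) / sin θ)`, written with `arctan` since Mathlib has no `arccot`. -/
noncomputable def kiteAngle (θ x : ℝ) : ℝ := π / 2 - arctan ((rexp (-x) - cos θ) / sin θ)

theorem kiteAngle_mem_Ioo (θ x : ℝ) : kiteAngle θ x ∈ Set.Ioo 0 π :=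
  pi_div_two_sub_arctan_mem_Ioo _

theorem exp_two_mul_I_kiteAngle {θ : ℝ} (hθ : sin θ ≠ 0) (x : ℝ) :
    cexp (2 * I * (kiteAngle θ x : ℂ)) = (1 - cexp (x - θ * I)) / (1 - cexp (x + θ * I)) := by
  rw [kiteAngle, exp_two_mul_I_pi_div_two_sub_arctan, one_sub_exp_div_one_sub_exp hθ]

theorem cos_lt_cosh {θ : ℝ} (hθ : sin θ ≠ 0) (x : ℝ) : cos θ < cosh x := by
  have hcos : cos θ < 1 := by
    nlinarith [sin_sq_add_cos_sq θ, cos_le_one θ, neg_one_le_cos θ, sq_pos_of_ne_zero hθ]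
  linarith [one_le_cosh x]

theorem hasDerivAt_kiteAngle {θ : ℝ} (hθ : sin θ ≠ 0) (x : ℝ) :
    HasDerivAt (kiteAngle θ) (sin θ / (2 * (cosh x - cos θ))) x := by
  set v := (rexp (-x) - cos θ) / sin θ
  have hv : HasDerivAt (fun y => (rexp (-y) - cos θ) / sin θ) (-rexp (-x) / sin θ) x := by
    simpa using (((hasDerivAt_neg x).exp).sub_const (cos θ)).div_const (sin θ)
  have hden : sin θ ^ 2 * (1 + v ^ 2) = rexp (-x) * (2 * (cosh x - cos θ)) := by
    have hinv : rexp (-x) * rexp x = 1 := by rw [← Real.exp_add, neg_add_cancel, Real.exp_zero]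
    simp only [v, cosh_eq]
    field_simp
    linear_combination sin_sq_add_cos_sq θ - hinv
  refine ((hasDerivAt_arctan v).comp x hv).const_sub (π / 2) |>.congr_deriv ?_
  have hpos : 0 < 1 + v ^ 2 := by positivity
  have hcosh : cosh x - cos θ ≠ 0 := (sub_pos.2 (cos_lt_cosh hθ x)).ne'
  clear_value v
  field_simp
  linear_combination -hden

/-- For `θ ∈ (0,π)`, the function
`f_θ(x) = (1/(2i))·log((1 - e^{x-iθ})/(1 - e^{x+iθ}))`, with the branch of the logarithm
chosen so that `0 < f_θ(x) < π` (encoded by the conditions `exp(2·i·f θ x) = ratio` and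
`f x ∈ (0,π)`), has derivative `f_θ'(x) = sin θ / (2(cosh x - cos θ)) > 0`;
hence `f_θ` is strictly increasing. -/
theorem circle_pattern_f_deriv_pos_strictMono
    (θ : ℝ) (hθ : θ ∈ Set.Ioo 0 Real.pi) (f : ℝ → ℝ)
    (hrange : ∀ x, f x ∈ Set.Ioo 0 Real.pi)
    (hbranch : ∀ x : ℝ,
      Complex.exp (2 * Complex.I * (f x : ℂ)) =
        (1 - Complex.exp ((x : ℂ) - (θ : ℂ) * Complex.I)) /
          (1 - Complex.exp ((x : ℂ) + (θ : ℂ) * Complex.I))) :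
    (∀ x : ℝ, HasDerivAt f (Real.sin θ / (2 * (Real.cosh x - Real.cos θ))) x) ∧
    (∀ x : ℝ, 0 < Real.sin θ / (2 * (Real.cosh x - Real.cos θ))) ∧
    StrictMono f := by
  have hsin : 0 < sin θ := sin_pos_of_pos_of_lt_pi hθ.1 hθ.2
  have hf : f = kiteAngle θ := funext fun x =>
    eq_of_exp_two_mul_I_eq (hrange x) (kiteAngle_mem_Ioo θ x)
      ((hbranch x).trans (exp_two_mul_I_kiteAngle hsin.ne' x).symm)
  have hderiv_pos : ∀ x, 0 < sin θ / (2 * (cosh x - cos θ)) := fun x =>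
    div_pos hsin (by linarith [cos_lt_cosh hsin.ne' x])
  subst hf
  exact ⟨hasDerivAt_kiteAngle hsin.ne', hderiv_pos,
    strictMono_of_hasDerivAt_pos (hasDerivAt_kiteAngle hsin.ne') hderiv_pos⟩
end

section
/- For θ ∈ (0,π) and all x ∈ ℝ, f_θ(x) + f_θ(-x) = π - θ. -/
open Real Filter Topology

/- The derivative `sin θ / (2 (cosh x - cos θ))` is even in `x`, so `f x + f (-x)` has derivative
zero and is constant; letting `x → +∞` identifies the constant as `(π - θ) + 0`. -/

section EvenDerivative

variable {f f' : ℝ → ℝ}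

theorem hasDerivAt_add_comp_neg_of_even (hf : ∀ x, HasDerivAt f (f' x) x)
    (heven : ∀ x, f' (-x) = f' x) (x : ℝ) : HasDerivAt (fun y => f y + f (-y)) 0 x := by
  have hneg : HasDerivAt (fun y => f (-y)) (-f' x) x := by
    simpa [heven, Function.comp_def] using (hf (-x)).comp x (hasDerivAt_neg x)
  simpa using (hf x).fun_add hneg

theorem add_comp_neg_eq_of_even_deriv {a b : ℝ} (hf : ∀ x, HasDerivAt f (f' x) x)
    (heven : ∀ x, f' (-x) = f' x) (hbot : Tendsto f atBot (𝓝 a))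
    (htop : Tendsto f atTop (𝓝 b)) (x : ℝ) : f x + f (-x) = b + a := by
  have hderiv := hasDerivAt_add_comp_neg_of_even hf heven
  have hconst : (fun y => f y + f (-y)) = fun _ => f x + f (-x) :=
    funext fun y => is_const_of_deriv_eq_zero (fun z => (hderiv z).differentiableAt)
      (fun z => (hderiv z).deriv) y x
  have hlim : Tendsto (fun y => f y + f (-y)) atTop (𝓝 (b + a)) :=
    htop.add (hbot.comp tendsto_neg_atTop_atBot)
  rw [hconst] at hlim
  exact tendsto_nhds_unique tendsto_const_nhds hlim

end EvenDerivative

theorem circle_pattern_f_functional_equation_general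
    (θ : ℝ) (f : ℝ → ℝ)
    (hderiv : ∀ x : ℝ, HasDerivAt f (Real.sin θ / (2 * (Real.cosh x - Real.cos θ))) x)
    (hbot : Tendsto f atBot (nhds 0))
    (htop : Tendsto f atTop (nhds (Real.pi - θ))) :
    ∀ x : ℝ, f x + f (-x) = Real.pi - θ := by
  intro x
  simpa using add_comp_neg_eq_of_even_deriv hderiv (fun y => by rw [cosh_neg]) hbot htop x

/-- For `θ ∈ (0,π)`, the function `f_θ` (characterized by its derivative
`f_θ'(x) = sin θ/(2(cosh x − cos θ))` together with `lim_{x→−∞} f_θ(x) = 0` and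
`lim_{x→+∞} f_θ(x) = π − θ`) satisfies `f_θ(x) + f_θ(−x) = π − θ` for all `x`. -/
theorem circle_pattern_f_functional_equation
    (θ : ℝ) (hθ : θ ∈ Set.Ioo 0 Real.pi) (f : ℝ → ℝ)
    (hderiv : ∀ x : ℝ, HasDerivAt f (Real.sin θ / (2 * (Real.cosh x - Real.cos θ))) x)
    (hbot : Tendsto f atBot (nhds 0))
    (htop : Tendsto f atTop (nhds (Real.pi - θ))) :
    ∀ x : ℝ, f x + f (-x) = Real.pi - θ :=
  circle_pattern_f_functional_equation_general θ f hderiv hbot htop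
end

section
/- For θ ∈ (0,π) and 0 < y < π − θ, the inverse function of f_θ is given by f_θ^{-1}(y) = log(sin y / sin(y + θ)). -/
open Real Filter Set Topology

/-!
The candidate inverse `g(y) = log (sin y / sin (y + θ))` satisfies
`g'(y) = sin θ / (sin y sin (y + θ))` and `cosh (g y) - cos θ = sin² θ / (2 sin y sin (y + θ))`
(law of cosines in the kite), so `(f ∘ g)' = 1` on `(0, π - θ)`. Since `g → -∞` as `y → 0⁺`,
`f ∘ g` and the identity also have the same limit `0` there, hence they agree.
-/

theorem eqOn_Ioo_of_hasDerivAt_eq_of_tendsto_nhdsGT {E : Type*} [NormedAddCommGroup E]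
    [NormedSpace ℝ E] {F G : ℝ → E} {F' : ℝ → E} {a b : ℝ} {c : E}
    (hF : ∀ x ∈ Ioo a b, HasDerivAt F (F' x) x) (hG : ∀ x ∈ Ioo a b, HasDerivAt G (F' x) x)
    (hFa : Tendsto F (𝓝[>] a) (𝓝 c)) (hGa : Tendsto G (𝓝[>] a) (𝓝 c)) :
    EqOn F G (Ioo a b) := by
  intro x hx
  have hderiv : ∀ t ∈ Ioo a b, HasDerivAt (fun t ↦ F t - G t) 0 t := fun t ht ↦
    ((hF t ht).sub (hG t ht)).congr_deriv (sub_self _)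
  obtain ⟨d, hd⟩ := isOpen_Ioo.exists_is_const_of_deriv_eq_zero isPreconnected_Ioo
    (fun t ht ↦ (hderiv t ht).differentiableAt.differentiableWithinAt)
    (fun t ht ↦ (hderiv t ht).deriv)
  have hlim : Tendsto (fun t ↦ F t - G t) (𝓝[>] a) (𝓝 d) :=
    tendsto_const_nhds.congr' <|
      eventuallyEq_of_mem (Ioo_mem_nhdsGT (hx.1.trans hx.2)) fun t ht ↦ (hd t ht).symm
  have hd0 : d = 0 := tendsto_nhds_unique hlim (by simpa using hFa.sub hGa)
  simpa [hd0, sub_eq_zero] using hd x hx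

theorem sin_sq_add_sin_add_sq_sub_mul_cos (y θ : ℝ) :
    sin y ^ 2 + sin (y + θ) ^ 2 - 2 * sin y * sin (y + θ) * cos θ = sin θ ^ 2 := by
  rw [sin_add]
  linear_combination sin θ ^ 2 * sin_sq_add_cos_sq y - sin y ^ 2 * sin_sq_add_cos_sq θ

noncomputable def halfAngleInv (θ y : ℝ) : ℝ := log (sin y / sin (y + θ))

theorem cosh_halfAngleInv_sub_cos {θ y : ℝ} (h : 0 < sin y * sin (y + θ)) :
    cosh (halfAngleInv θ y) - cos θ = sin θ ^ 2 / (2 * sin y * sin (y + θ)) := by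
  have hy : sin y ≠ 0 := left_ne_zero_of_mul h.ne'
  have hyθ : sin (y + θ) ≠ 0 := right_ne_zero_of_mul h.ne'
  have hratio : 0 < sin y / sin (y + θ) := by
    rw [← mul_div_mul_right _ _ hyθ]
    exact div_pos h (mul_self_pos.2 hyθ)
  rw [halfAngleInv, cosh_log hratio, ← sin_sq_add_sin_add_sq_sub_mul_cos y θ]
  field_simp

theorem hasDerivAt_halfAngleInv {θ y : ℝ} (hy : sin y ≠ 0) (hyθ : sin (y + θ) ≠ 0) :
    HasDerivAt (halfAngleInv θ) (sin θ / (sin y * sin (y + θ))) y := by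
  have hshift : HasDerivAt (fun t ↦ sin (t + θ)) (cos (y + θ)) y := by
    exact (hasDerivAt_sin (y + θ)).comp_add_const y θ
  convert ((hasDerivAt_sin y).div hshift hyθ).log (div_ne_zero hy hyθ) using 1
  · rfl
  rw [Pi.div_apply, show sin θ = sin (y + θ - y) by ring_nf, sin_sub]
  field_simp

theorem tendsto_halfAngleInv_nhdsGT_zero {θ : ℝ} (hθ : 0 < sin θ) :
    Tendsto (halfAngleInv θ) (𝓝[>] 0) atBot := by
  have hcont : ContinuousAt (fun t ↦ sin t / sin (t + θ)) 0 :=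
    continuous_sin.continuousAt.div (continuous_sin.comp (continuous_add_const θ)).continuousAt
      (by simpa using hθ.ne')
  have hshift_pos : ∀ᶠ t in 𝓝[>] (0 : ℝ), 0 < sin (t + θ) :=
    nhdsWithin_le_nhds <| (continuous_sin.comp (continuous_add_const θ)).continuousAt.eventually
      (lt_mem_nhds (by simpa using hθ))
  have hsin_pos : ∀ᶠ t in 𝓝[>] (0 : ℝ), 0 < sin t :=
    eventually_of_mem (Ioo_mem_nhdsGT pi_pos) fun t ht ↦ sin_pos_of_pos_of_lt_pi ht.1 ht.2
  refine tendsto_log_nhdsGT_zero.comp <| tendsto_nhdsWithin_iff.2 ⟨?_, ?_⟩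
  · simpa using hcont.tendsto.mono_left nhdsWithin_le_nhds
  · filter_upwards [hsin_pos, hshift_pos] with t h₁ h₂ using div_pos h₁ h₂

theorem hasDerivAt_comp_halfAngleInv {θ y : ℝ} {f : ℝ → ℝ}
    (hf : ∀ x, HasDerivAt f (sin θ / (2 * (cosh x - cos θ))) x) (hθ : sin θ ≠ 0)
    (hy : 0 < sin y * sin (y + θ)) :
    HasDerivAt (f ∘ halfAngleInv θ) 1 y := by
  refine ((hf _).comp y (hasDerivAt_halfAngleInv (θ := θ) (left_ne_zero_of_mul hy.ne')
    (right_ne_zero_of_mul hy.ne'))).congr_deriv ?_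
  rw [cosh_halfAngleInv_sub_cos hy]
  field_simp
  exact div_self hy.ne'

theorem circle_pattern_f_inverse_general
    (θ : ℝ) (hθ : θ ∈ Set.Ioo 0 Real.pi) (f : ℝ → ℝ)
    (hderiv : ∀ x : ℝ, HasDerivAt f (Real.sin θ / (2 * (Real.cosh x - Real.cos θ))) x)
    (hbot : Tendsto f atBot (nhds 0)) :
    ∀ y : ℝ, 0 < y → y < Real.pi - θ →
      f (Real.log (Real.sin y / Real.sin (y + θ))) = y := by
  have hsinθ : 0 < sin θ := sin_pos_of_pos_of_lt_pi hθ.1 hθ.2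
  have hpos : ∀ y ∈ Ioo 0 (π - θ), 0 < sin y * sin (y + θ) := fun y hy ↦
    mul_pos (sin_pos_of_pos_of_lt_pi hy.1 (by linarith [hy.2, hθ.1]))
      (sin_pos_of_pos_of_lt_pi (by linarith [hy.1, hθ.1]) (by linarith [hy.2]))
  intro y hy₀ hy₁
  exact eqOn_Ioo_of_hasDerivAt_eq_of_tendsto_nhdsGT
    (fun t ht ↦ hasDerivAt_comp_halfAngleInv hderiv hsinθ.ne' (hpos t ht))
    (fun t _ ↦ hasDerivAt_id t) (hbot.comp (tendsto_halfAngleInv_nhdsGT_zero hsinθ))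
    nhdsWithin_le_nhds ⟨hy₀, hy₁⟩

/-- For `θ ∈ (0,π)`, the strictly increasing function
`f_θ : ℝ → (0, π−θ)` with derivative `f_θ'(x) = sin θ/(2(cosh x − cos θ))` and limits
`0` at `−∞`, `π−θ` at `+∞` has inverse `f_θ⁻¹(y) = log(sin y / sin(y + θ))` for
`0 < y < π − θ`. -/
theorem circle_pattern_f_inverse
    (θ : ℝ) (hθ : θ ∈ Set.Ioo 0 Real.pi) (f : ℝ → ℝ)
    (hderiv : ∀ x : ℝ, HasDerivAt f (Real.sin θ / (2 * (Real.cosh x - Real.cos θ))) x)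
    (hrange : ∀ x : ℝ, f x ∈ Set.Ioo 0 (Real.pi - θ))
    (hbot : Tendsto f atBot (nhds 0))
    (htop : Tendsto f atTop (nhds (Real.pi - θ))) :
    ∀ y : ℝ, 0 < y → y < Real.pi - θ →
      f (Real.log (Real.sin y / Real.sin (y + θ))) = y :=
  circle_pattern_f_inverse_general θ hθ f hderiv hbot
end

section
/- For θ ∈ (0,π) and β ∈ [0,π), the generalized angle function φ^g(ρ, β, θ) := f_θ(iβ − ρ) − f_θ(iβ + ρ) (with f_θ analytically continued) satisfies, for ρ < 0 and β > 0, ∂φ^g/∂β = −sin θ · sinh ρ · sin β / |cosh(ρ + iβ) − cos θ|² > 0, and ∂φ^g/∂β = 0 when β = 0. -/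
/-!
By the chain rule, `∂φ/∂β = i F'(iβ - ρ) - i F'(iβ + ρ)`. Since `cosh (iβ - ρ)` is the conjugate of
`cosh (ρ + iβ)`, both terms are built from `w = cosh (ρ + iβ) - cos θ` and its conjugate, and
`i s / (2 w̄) - i s / (2 w) = -s Im w / |w|²` with `Im w = sinh ρ sin β`. The point `w` is never
zero: for `β = 0` it is `cosh ρ - cos θ > 0`, otherwise its imaginary part is nonzero.
-/

open Real Complex ComplexConjugate

theorem Complex.cosh_ofReal_add_mul_I_im (x y : ℝ) :
    (cosh ((x : ℂ) + I * y)).im = Real.sinh x * Real.sin y := by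
  rw [cosh_add, mul_comm I, cosh_mul_I, sinh_mul_I, ← ofReal_cosh, ← ofReal_sinh, ← ofReal_cos,
    ← ofReal_sin]
  simp only [add_im, mul_im, ofReal_re, ofReal_im, I_re, I_im]
  ring

theorem Complex.cosh_I_mul_sub_ofReal (x y : ℝ) :
    cosh (I * y - x) = conj (cosh (x + I * y)) := by
  rw [← cosh_conj, ← cosh_neg]
  congr 1
  simp [Complex.ext_iff]

theorem Complex.cosh_ofReal_add_mul_I_sub_cos_ne_zero {x y : ℝ} (θ : ℝ) (hx : x ≠ 0) (hy₀ : 0 ≤ y)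
    (hy : y < π) : cosh ((x : ℂ) + I * y) - cos θ ≠ 0 := by
  rcases hy₀.eq_or_lt with rfl | hy₀
  · have : Real.cos θ < Real.cosh x := (Real.cos_le_one θ).trans_lt (Real.one_lt_cosh.mpr hx)
    simpa [← ofReal_cosh, ← ofReal_cos, ← ofReal_sub, sub_eq_zero] using this.ne'
  · intro h
    have := congrArg Complex.im h
    rw [sub_im, cosh_ofReal_add_mul_I_im, ← ofReal_cos, ofReal_im, sub_zero, zero_im] at this
    exact mul_ne_zero (Real.sinh_ne_zero.mpr hx) (Real.sin_pos_of_pos_of_lt_pi hy₀ hy).ne' this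

theorem Complex.I_mul_div_conj_sub_I_mul_div (s : ℝ) {w : ℂ} (hw : w ≠ 0) :
    I * (s / (2 * conj w)) - I * (s / (2 * w)) = ((-s * w.im / ‖w‖ ^ 2 : ℝ) : ℂ) := by
  have hw' : conj w ≠ 0 := (map_ne_zero _).mpr hw
  have him : (w.im : ℂ) * (2 * I) = w - conj w := by rw [sub_conj]; push_cast; ring
  push_cast
  rw [← mul_conj']
  field_simp
  linear_combination (-I * s) * him + 2 * s * w.im * I_sq

theorem HasDerivAt.comp_I_mul_add {F : ℂ → ℂ} {F' c : ℂ} {t : ℝ}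
    (hF : HasDerivAt F F' (I * t + c)) : HasDerivAt (fun s : ℝ => F (I * s + c)) (I * F') t := by
  have : HasDerivAt (fun s : ℝ => I * s + c) I t := by
    simpa using ((hasDerivAt_id t).ofReal_comp.const_mul I).add_const c
  exact hF.scomp t this

theorem HasDerivAt.complex_re {f : ℝ → ℂ} {f' : ℂ} {x : ℝ} (h : HasDerivAt f f' x) :
    HasDerivAt (fun t => (f t).re) f'.re x :=
  reCLM.hasFDerivAt.comp_hasDerivAt x h

/-- Let `θ ∈ (0,π)` and let `F` be the analytic continuation of `f_θ`
to the strip `{x+iy : y ∈ (−π,π)}` minus the imaginary segments (so off `re z = 0`),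
characterized by `F'(z) = sin θ/(2(cosh z − cos θ))` there.  The generalized angle
`φ^g(ρ, β, θ) = f_θ(iβ − ρ) − f_θ(iβ + ρ)` satisfies, for `ρ < 0` and `β ∈ [0,π)`,
`∂φ^g/∂β = −sin θ · sinh ρ · sin β / |cosh(ρ + iβ) − cos θ|²`, which is `> 0` for `β > 0`
and `= 0` for `β = 0`. -/
theorem generalized_angle_beta_derivative
    (θ : ℝ) (hθ : θ ∈ Set.Ioo 0 Real.pi) (F : ℂ → ℂ)
    (hF : ∀ z : ℂ, z.re ≠ 0 → -Real.pi < z.im → z.im < Real.pi →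
      HasDerivAt F (Complex.sin (θ : ℂ) / (2 * (Complex.cosh z - Complex.cos (θ : ℂ)))) z) :
    ∀ ρ β : ℝ, ρ < 0 → 0 ≤ β → β < Real.pi →
      (HasDerivAt (fun b : ℝ => (F (Complex.I * (b : ℂ) - (ρ : ℂ))
            - F (Complex.I * (b : ℂ) + (ρ : ℂ))).re)
        (-(Real.sin θ) * Real.sinh ρ * Real.sin β /
          (‖Complex.cosh ((ρ : ℂ) + Complex.I * (β : ℂ)) - Complex.cos (θ : ℂ)‖)^2)
        β) ∧
      (0 < β → 0 < -(Real.sin θ) * Real.sinh ρ * Real.sin β /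
          (‖Complex.cosh ((ρ : ℂ) + Complex.I * (β : ℂ)) - Complex.cos (θ : ℂ)‖)^2) ∧
      (β = 0 → -(Real.sin θ) * Real.sinh ρ * Real.sin β /
          (‖Complex.cosh ((ρ : ℂ) + Complex.I * (β : ℂ)) - Complex.cos (θ : ℂ)‖)^2
          = 0) := by
  intro ρ β hρ hβ₀ hβπ
  set w := Complex.cosh ((ρ : ℂ) + I * β) - Complex.cos (θ : ℂ)
  have hw : w ≠ 0 := cosh_ofReal_add_mul_I_sub_cos_ne_zero θ hρ.ne hβ₀ hβπ
  refine ⟨?_, fun hβ => div_pos ?_ (pow_pos (norm_pos_iff.mpr hw) 2), fun hβ => by simp [hβ]⟩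
  · have hw_im : w.im = Real.sinh ρ * Real.sin β := by
      rw [sub_im, cosh_ofReal_add_mul_I_im, ← ofReal_cos, ofReal_im, sub_zero]
    have hβ_gt : -π < β := by linarith [pi_pos]
    have h₁ := (hF (I * β + -ρ) (by simpa using hρ.ne) (by simpa using hβ_gt)
      (by simpa using hβπ)).comp_I_mul_add
    have h₂ := (hF (I * β + ρ) (by simpa using hρ.ne) (by simpa using hβ_gt)
      (by simpa using hβπ)).comp_I_mul_add
    simp only [← sub_eq_add_neg] at h₁
    have hconj : Complex.cosh (I * β - ρ) - Complex.cos (θ : ℂ) = conj w := by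
      rw [cosh_I_mul_sub_ofReal, ← ofReal_cos, ← conj_ofReal (Real.cos θ), ← map_sub, ofReal_cos]
    have h := h₁.sub h₂
    rw [hconj, add_comm _ (ρ : ℂ), ← ofReal_sin, I_mul_div_conj_sub_I_mul_div _ hw, hw_im,
      ← mul_assoc] at h
    simpa only [Pi.sub_apply, sub_re, ofReal_re] using h.complex_re
  · have hsinθ := Real.sin_pos_of_pos_of_lt_pi hθ.1 hθ.2
    have hsinβ := Real.sin_pos_of_pos_of_lt_pi hβ hβπ
    exact mul_pos (mul_pos_of_neg_of_neg (neg_neg_of_pos hsinθ) (Real.sinh_neg_iff.mpr hρ)) hsinβ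
end

section
/- Liouville-type maximum principle for S_hyp: Let G be a finite graph with admissible labelling α : E(G) → (0,π), and let ρ, ρ* : V(G) → (−∞,0) be two solutions of the hyperbolic circle pattern equations 2π = 2·Σ_{[v₀,v]∈E} (f_{α}(ρ(v)−ρ(v₀)) − f_{α}(ρ(v)+ρ(v₀))) at every interior vertex. If ρ*(v) ≥ ρ(v) for every boundary vertex v, then ρ*(v) ≥ ρ(v) for all vertices v. -/
/-!
Suppose `ρ - ρs` has a positive maximum `M`, attained at `v₀`. Then `v₀` is interior, and
every summand at `v₀` is strictly smaller for `ρ` than for `ρs`: writing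
`g = f (α v₀ v)` and `c = ρs v₀`, replacing `(ρ v, ρ v₀)` by `(ρ v - M, c)` keeps
`g (ρ v - ρ v₀)` and strictly increases `-g (ρ v + ρ v₀)` since `g` is increasing; and
`x ↦ g (x - c) - g (x + c)` is monotone on `x ≤ 0`, because `g'` is even and decreasing in
`|x|`, so raising `ρ v - M` to `ρs v` does not decrease it. Summing contradicts the two
equations at `v₀`.
-/

open Real Set Finset

namespace HyperbolicCirclePattern

lemma cos_lt_cosh {θ : ℝ} (hθ : θ ∈ Ioo 0 π) (x : ℝ) : cos θ < cosh x :=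
  calc cos θ < cos 0 := cos_lt_cos_of_nonneg_of_le_pi le_rfl hθ.2.le hθ.1
    _ = 1 := cos_zero
    _ ≤ cosh x := one_le_cosh x

lemma sin_div_cosh_sub_cos_pos {θ : ℝ} (hθ : θ ∈ Ioo 0 π) (x : ℝ) :
    0 < sin θ / (2 * (cosh x - cos θ)) :=
  div_pos (sin_pos_of_pos_of_lt_pi hθ.1 hθ.2) (by linarith [cos_lt_cosh hθ x])

lemma sin_div_cosh_sub_cos_le_of_abs_le {θ x y : ℝ} (hθ : θ ∈ Ioo 0 π) (hxy : |x| ≤ |y|) :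
    sin θ / (2 * (cosh y - cos θ)) ≤ sin θ / (2 * (cosh x - cos θ)) :=
  div_le_div_of_nonneg_left (sin_pos_of_pos_of_lt_pi hθ.1 hθ.2).le
    (by linarith [cos_lt_cosh hθ x]) (by linarith [cosh_le_cosh.2 hxy])

lemma monotoneOn_sub_comp_sub_comp_add {θ c : ℝ} {g : ℝ → ℝ} (hθ : θ ∈ Ioo 0 π)
    (hg : ∀ x, HasDerivAt g (sin θ / (2 * (cosh x - cos θ))) x) (hc : c ≤ 0) :
    MonotoneOn (fun x ↦ g (x - c) - g (x + c)) (Iic 0) := by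
  have hderiv : ∀ x, HasDerivAt (fun x ↦ g (x - c) - g (x + c))
      (sin θ / (2 * (cosh (x - c) - cos θ)) - sin θ / (2 * (cosh (x + c) - cos θ))) x :=
    fun x ↦ ((hg (x - c)).comp_sub_const x c).sub ((hg (x + c)).comp_add_const x c)
  refine monotoneOn_of_hasDerivWithinAt_nonneg (convex_Iic 0)
    (fun x _ ↦ (hderiv x).continuousAt.continuousWithinAt)
    (fun x _ ↦ (hderiv x).hasDerivWithinAt) fun x hx ↦ ?_
  rw [interior_Iic, Set.mem_Iio] at hx
  have habs : |x - c| ≤ |x + c| := by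
    rw [abs_of_neg (by linarith : x + c < 0), abs_le]
    constructor <;> linarith
  exact sub_nonneg.2 (sin_div_cosh_sub_cos_le_of_abs_le hθ habs)

lemma sub_comp_sub_sub_comp_add_lt {θ x y x' y' : ℝ} {g : ℝ → ℝ} (hθ : θ ∈ Ioo 0 π)
    (hg : ∀ x, HasDerivAt g (sin θ / (2 * (cosh x - cos θ))) x)
    (hx' : x' ≤ 0) (hy' : y' ≤ 0) (hdiff : x - x' ≤ y - y') (hpos : 0 < y - y') :
    g (x - y) - g (x + y) < g (x' - y') - g (x' + y') := by
  have hmono : StrictMono g := strictMono_of_hasDerivAt_pos hg (sin_div_cosh_sub_cos_pos hθ)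
  set M := y - y'
  calc g (x - y) - g (x + y) < g (x - M - y') - g (x - M + y') := by
        have hshift : x - M + y' < x + y := by linarith
        rw [show x - M - y' = x - y by ring]
        linarith [hmono hshift]
    _ ≤ g (x' - y') - g (x' + y') :=
        monotoneOn_sub_comp_sub_comp_add hθ hg hy' (Set.mem_Iic.2 (by linarith)) hx'
          (by linarith)

end HyperbolicCirclePattern

open HyperbolicCirclePattern

theorem hyperbolic_circle_pattern_maximum_principle_general
    {V : Type*} [Fintype V] (G : SimpleGraph V) [DecidableRel G.Adj]
    (boundary : Set V)
    (α : V → V → ℝ)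
    (hα : ∀ u v, G.Adj u v → α u v ∈ Set.Ioo 0 Real.pi)
    (f : ℝ → ℝ → ℝ)
    (hf : ∀ θ ∈ Set.Ioo 0 Real.pi, ∀ x : ℝ,
      HasDerivAt (f θ) (Real.sin θ / (2 * (Real.cosh x - Real.cos θ))) x)
    (ρ ρs : V → ℝ) (hρs : ∀ v, ρs v < 0)
    (heq : ∀ v₀, v₀ ∉ boundary →
      2 * Real.pi = 2 * ∑ v ∈ G.neighborFinset v₀,
        (f (α v₀ v) (ρ v - ρ v₀) - f (α v₀ v) (ρ v + ρ v₀)))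
    (heqs : ∀ v₀, v₀ ∉ boundary →
      2 * Real.pi = 2 * ∑ v ∈ G.neighborFinset v₀,
        (f (α v₀ v) (ρs v - ρs v₀) - f (α v₀ v) (ρs v + ρs v₀)))
    (hbd : ∀ v ∈ boundary, ρ v ≤ ρs v) :
    ∀ v, ρ v ≤ ρs v := by
  by_contra! ⟨w, hw⟩
  obtain ⟨v₀, -, hmax⟩ := exists_max_image univ (fun v ↦ ρ v - ρs v) ⟨w, mem_univ w⟩
  have hM : 0 < ρ v₀ - ρs v₀ := by linarith [hmax w (mem_univ w)]
  have hv₀ : v₀ ∉ boundary := fun hb ↦ by linarith [hbd v₀ hb]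
  have hne : (G.neighborFinset v₀).Nonempty := by
    by_contra! hempty
    have h := heq v₀ hv₀
    rw [hempty, sum_empty] at h
    linarith [pi_pos]
  have hlt : ∑ v ∈ G.neighborFinset v₀, (f (α v₀ v) (ρ v - ρ v₀) - f (α v₀ v) (ρ v + ρ v₀))
      < ∑ v ∈ G.neighborFinset v₀, (f (α v₀ v) (ρs v - ρs v₀) - f (α v₀ v) (ρs v + ρs v₀)) :=
    sum_lt_sum_of_nonempty hne fun v hv ↦ by
      have hθ := hα v₀ v ((G.mem_neighborFinset v₀ v).1 hv)
      exact sub_comp_sub_sub_comp_add_lt hθ (hf _ hθ) (hρs v).le (hρs v₀).le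
        (by linarith [hmax v (mem_univ v)]) hM
  linarith [heq v₀ hv₀, heqs v₀ hv₀]

/-- **Maximum principle in the hyperbolic plane.**
Let `G` be a finite graph with labelling `α : E(G) → (0,π)`, and let
`ρ, ρ* : V(G) → (−∞,0)` be two solutions of the hyperbolic circle pattern equations
`2π = 2·Σ_{[v₀,v]∈E} (f_α(ρ(v)−ρ(v₀)) − f_α(ρ(v)+ρ(v₀)))` at every interior vertex,
where `f_θ` has derivative `sin θ/(2(cosh x − cos θ))`.  If `ρ*(v) ≥ ρ(v)` on the boundary,
then `ρ*(v) ≥ ρ(v)` everywhere. -/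
theorem hyperbolic_circle_pattern_maximum_principle
    {V : Type*} [Fintype V] (G : SimpleGraph V) [DecidableRel G.Adj]
    (boundary : Set V)
    (α : V → V → ℝ) (hαsymm : ∀ u v, α u v = α v u)
    (hα : ∀ u v, G.Adj u v → α u v ∈ Set.Ioo 0 Real.pi)
    (f : ℝ → ℝ → ℝ)
    (hf : ∀ θ ∈ Set.Ioo 0 Real.pi, ∀ x : ℝ,
      HasDerivAt (f θ) (Real.sin θ / (2 * (Real.cosh x - Real.cos θ))) x)
    (ρ ρs : V → ℝ) (hρ : ∀ v, ρ v < 0) (hρs : ∀ v, ρs v < 0)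
    (heq : ∀ v₀, v₀ ∉ boundary →
      2 * Real.pi = 2 * ∑ v ∈ G.neighborFinset v₀,
        (f (α v₀ v) (ρ v - ρ v₀) - f (α v₀ v) (ρ v + ρ v₀)))
    (heqs : ∀ v₀, v₀ ∉ boundary →
      2 * Real.pi = 2 * ∑ v ∈ G.neighborFinset v₀,
        (f (α v₀ v) (ρs v - ρs v₀) - f (α v₀ v) (ρs v + ρs v₀)))
    (hbd : ∀ v ∈ boundary, ρ v ≤ ρs v) :
    ∀ v, ρ v ≤ ρs v :=
  hyperbolic_circle_pattern_maximum_principle_general G boundary α hα f hf ρ ρs hρs heq heqs hbd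
end

section
/- Let a circle pattern have only convex kites and all intersection angles α(e) ≥ α₀ with 0 < α₀ ≤ π/2. Then for every interior vertex v, the set S(v) (intersection of the disc B(v) with the union of kites incident to v) contains a disc I(v) centered at the center c(v) of radius r(v)·sin α₀; in particular r(v) ≤ (1/sin α₀)·r_I(v). -/
/-! The diagonal `[c, b i]` of the convex kite meets the chord `[p i, p (i + 1)]`, so the sector at
`c` spanned by `p i` and `p (i + 1)` is covered by the sectors spanned by `p i, b i` and by
`b i, p (i + 1)`. Near `c`, each of these sectors lies in the triangle with apex `c`, up to the
distance from `c` to the opposite edge `[p, b i]`; by the law of cosines along that edge this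
distance is at least `r * sin α₀` (at least `r` when the angle at `p` is obtuse). Since the sectors
of the kites cover all directions at `c`, the disc of radius `r * sin α₀` lies in their union. -/

open Real Metric EuclideanGeometry

section Altitude

variable {V P : Type*} [NormedAddCommGroup V] [InnerProductSpace ℝ V] [MetricSpace P]
  [NormedAddTorsor V P]

theorem Wbtw.dist_mul_self_eq {c p m b : P} (h : Wbtw ℝ p m b) :
    dist c m * dist c m = dist c p * dist c p + dist m p * dist m p -
      2 * dist c p * dist m p * cos (∠ c p b) := by
  rcases eq_or_ne m p with rfl | hmp
  · simp
  · rw [← h.angle_eq_right c hmp]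
    exact dist_sq_eq_dist_sq_add_dist_sq_sub_two_mul_dist_mul_dist_mul_cos_angle c p m

theorem Wbtw.mul_sin_le_dist {c p m b : P} {α₀ : ℝ} (h₀ : 0 ≤ α₀) (h₁ : α₀ ≤ π / 2)
    (hα : α₀ ≤ ∠ c p b) (h : Wbtw ℝ p m b) : dist c p * sin α₀ ≤ dist c m := by
  have hcos := h.dist_mul_self_eq (c := c)
  set r := dist c p
  set d := dist m p
  have hr : 0 ≤ r := dist_nonneg
  have hd : 0 ≤ d := dist_nonneg
  have hsq : (r * sin α₀) ^ 2 ≤ dist c m ^ 2 := by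
    rcases le_or_gt (cos (∠ c p b)) 0 with hneg | hpos
    · nlinarith [sin_sq_le_one α₀, mul_nonneg (mul_nonneg hr hd) (neg_nonneg.2 hneg)]
    · have hle : ∠ c p b ≤ π / 2 := by
        by_contra! hgt
        exact (cos_neg_of_pi_div_two_lt_of_lt hgt (by linarith [angle_le_pi c p b])).not_gt hpos
      have hsin : sin α₀ ≤ sin (∠ c p b) := sin_le_sin_of_le_of_le_pi_div_two (by linarith) hle hα
      -- the squared distance is `(d - r cos θ)² + (r sin θ)²`, and the first square is nonnegative
      nlinarith [sin_sq_add_cos_sq (∠ c p b), sq_nonneg (d - r * cos (∠ c p b)),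
        mul_self_le_mul_self (sin_nonneg_of_nonneg_of_le_pi h₀ (by linarith)) hsin]
  exact abs_le_of_sq_le_sq' hsq dist_nonneg |>.2

end Altitude

section Cone

variable {E : Type*} [AddCommGroup E] [Module ℝ E]

theorem exists_nonneg_smul_add_smul_of_mul_le {P P' B u : E} {μ x y s t : ℝ}
    (hμ : 0 ≤ μ) (hy : 0 ≤ y) (hxy : 0 < x + y) (hB : μ • B = x • P + y • P')
    (hs : 0 ≤ s) (ht : 0 ≤ t) (hu : u = s • P + t • P') (hst : t * x ≤ s * y) :
    ∃ a e : ℝ, 0 ≤ a ∧ 0 ≤ e ∧ u = a • P + e • B := by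
  rcases hy.eq_or_lt with rfl | hy
  · have ht0 : t = 0 := by nlinarith
    exact ⟨s, 0, hs, le_rfl, by simp [hu, ht0]⟩
  · refine ⟨(s * y - t * x) / y, t * μ / y, by have := sub_nonneg.2 hst; positivity,
      by positivity, ?_⟩
    have hyu : y • u = (s * y - t * x) • P + (t * μ) • B := by
      rw [mul_smul t μ, hB, hu]
      module
    rw [div_eq_inv_mul, div_eq_inv_mul, mul_smul, mul_smul, ← smul_add, ← hyu,
      inv_smul_smul₀ hy.ne']

theorem exists_nonneg_smul_add_smul_or_of_smul_eq {P P' B u : E} {μ x y s t : ℝ}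
    (hμ : 0 ≤ μ) (hx : 0 ≤ x) (hy : 0 ≤ y) (hxy : 0 < x + y) (hB : μ • B = x • P + y • P')
    (hs : 0 ≤ s) (ht : 0 ≤ t) (hu : u = s • P + t • P') :
    (∃ a e : ℝ, 0 ≤ a ∧ 0 ≤ e ∧ u = a • P + e • B) ∨
      ∃ a e : ℝ, 0 ≤ a ∧ 0 ≤ e ∧ u = a • P' + e • B := by
  rcases le_total (t * x) (s * y) with hst | hts
  · exact .inl (exists_nonneg_smul_add_smul_of_mul_le hμ hy hxy hB hs ht hu hst)
  · rw [add_comm] at hxy hB hu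
    exact .inr (exists_nonneg_smul_add_smul_of_mul_le hμ hx hxy hB ht hs hu hts)

theorem exists_smul_sub_eq_of_segment_inter_nonempty {c b p p' : E}
    (h : (segment ℝ c b ∩ segment ℝ p p').Nonempty) :
    ∃ μ x y : ℝ, 0 ≤ μ ∧ 0 ≤ x ∧ 0 ≤ y ∧ x + y = 1 ∧
      μ • (b - c) = x • (p - c) + y • (p' - c) := by
  obtain ⟨q, ⟨ν, μ, -, hμ, hνμ, hcb⟩, ⟨x, y, hx, hy, hxy, hpp'⟩⟩ := h
  refine ⟨μ, x, y, hμ, hx, hy, hxy, ?_⟩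
  obtain rfl : ν = 1 - μ := by linarith
  obtain rfl : x = 1 - y := by linarith
  linear_combination (norm := module) hcb - hpp'

end Cone

theorem mem_convexHull_triple_of_mem_ball {E : Type*} [NormedAddCommGroup E] [NormedSpace ℝ E]
    {c p b u : E} {a e ρ : ℝ} (ha : 0 ≤ a) (he : 0 ≤ e)
    (hu : u - c = a • (p - c) + e • (b - c)) (hedge : ∀ m ∈ segment ℝ p b, ρ ≤ dist c m)
    (hball : u ∈ ball c ρ) : u ∈ convexHull ℝ {c, p, b} := by
  rw [convexHull_insert (Set.insert_nonempty _ _), convexHull_pair, mem_convexJoin]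
  refine ⟨c, rfl, ?_⟩
  rcases (add_nonneg ha he).eq_or_lt with hT | hT
  · obtain ⟨rfl, rfl⟩ := (add_eq_zero_iff_of_nonneg ha he).1 hT.symm
    rw [zero_smul, zero_smul, add_zero, sub_eq_zero] at hu
    exact ⟨p, left_mem_segment ℝ p b, hu ▸ left_mem_segment ℝ c p⟩
  set T := a + e
  set m := (a / T) • p + (e / T) • b
  have hm : m ∈ segment ℝ p b :=
    ⟨a / T, e / T, by positivity, by positivity, by rw [← add_div, div_self hT.ne'], rfl⟩
  have hTm : T • m = a • p + e • b := by
    simp only [m, smul_add, smul_smul, mul_div_cancel₀ _ hT.ne']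
  have hum : u - c = T • (m - c) := by
    rw [smul_sub, hTm, hu]
    module
  have hT1 : T ≤ 1 := by
    have hdist : dist c u = T * dist c m := by
      rw [dist_comm, dist_eq_norm, hum, norm_smul, Real.norm_of_nonneg hT.le, ← dist_eq_norm,
        dist_comm]
    nlinarith [hedge m hm, mem_ball'.1 hball, dist_nonneg (x := c) (y := m)]
  refine ⟨m, hm, 1 - T, T, sub_nonneg.2 hT1, hT.le, sub_add_cancel 1 T, ?_⟩
  rw [sub_eq_iff_eq_add'.1 hum]
  module

theorem interior_vertex_contains_inner_disc_general
    {m : ℕ} (c : ℂ) (r : ℝ)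
    (p b : Fin (m + 1) → ℂ) (α : Fin (m + 1) → ℝ) (α₀ : ℝ)
    (hα₀ : 0 < α₀) (hα₀' : α₀ ≤ Real.pi / 2)
    (hα : ∀ i, α₀ ≤ α i ∧ α i < Real.pi)
    (hp : ∀ i, dist c (p i) = r)
    (hangle : ∀ i, EuclideanGeometry.angle c (p i) (b i) = α i ∧
      EuclideanGeometry.angle c (p (i + 1)) (b i) = α i)
    (hconvex : ∀ i, (segment ℝ c (b i) ∩ segment ℝ (p i) (p (i + 1))).Nonempty)
    (hsurround : ∀ u : ℂ, ∃ i : Fin (m + 1), ∃ s t : ℝ, 0 ≤ s ∧ 0 ≤ t ∧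
      u - c = s • (p i - c) + t • (p (i + 1) - c)) :
    (ball c (r * Real.sin α₀) ⊆
      closedBall c r ∩ ⋃ i : Fin (m + 1), convexHull ℝ {c, p i, b i, p (i + 1)}) ∧
    r ≤ (1 / Real.sin α₀) * (r * Real.sin α₀) := by
  have hsin : 0 < sin α₀ := sin_pos_of_pos_of_lt_pi hα₀ (by linarith [pi_pos])
  have hr : 0 ≤ r := hp 0 ▸ dist_nonneg
  refine ⟨fun u hu => ⟨?_, ?_⟩, le_of_eq (by field_simp)⟩
  · exact ball_subset_closedBall (ball_subset_ball (mul_le_of_le_one_right hr (sin_le_one α₀)) hu)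
  obtain ⟨i, s, t, hs, ht, hst⟩ := hsurround u
  have hedge {q : ℂ} (hq : dist c q = r) (hqα : α₀ ≤ ∠ c q (b i)) :
      ∀ m ∈ segment ℝ q (b i), r * sin α₀ ≤ dist c m := fun m hm =>
    hq ▸ (mem_segment_iff_wbtw.1 hm).mul_sin_le_dist hα₀.le hα₀' hqα
  obtain ⟨μ, x, y, hμ, hx, hy, hxy, hb⟩ := exists_smul_sub_eq_of_segment_inter_nonempty (hconvex i)
  refine Set.mem_iUnion.2 ⟨i, ?_⟩
  rcases exists_nonneg_smul_add_smul_or_of_smul_eq hμ hx hy (by linarith) hb hs ht hst with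
    ⟨a, e, ha, he, hu'⟩ | ⟨a, e, ha, he, hu'⟩
  · refine convexHull_mono ?_ (mem_convexHull_triple_of_mem_ball ha he hu'
      (hedge (hp i) ((hangle i).1 ▸ (hα i).1)) hu)
    simp [Set.insert_subset_iff]
  · refine convexHull_mono ?_ (mem_convexHull_triple_of_mem_ball ha he hu'
      (hedge (hp (i + 1)) ((hangle i).2 ▸ (hα i).1)) hu)
    simp [Set.insert_subset_iff]

/-- Consider an interior vertex of a circle pattern: a circle of radius `r`
centered at `c`, with the incident kites `K i = convexHull {c, p i, b i, p (i+1)}` (the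
intersection points `p i` lie on the circle, `b i` are the neighboring centers, consecutive
kites share the edges `[c, p i]`, and the kite angle at each intersection point is the exterior
intersection angle `α i ∈ [α₀, π)`, `0 < α₀ ≤ π/2`).  Assume all kites are convex (the two
diagonals intersect) and the kites surround `c` (their sectors at `c` cover all directions).
Then `S(v) = B(v) ∩ ⋃ kites` contains the disc `I(v)` centered at `c` of radius `r·sin α₀`;
in particular `r ≤ (1/sin α₀)·r_I(v)`. -/
theorem interior_vertex_contains_inner_disc
    {m : ℕ} (c : ℂ) (r : ℝ) (hr : 0 < r)
    (p b : Fin (m + 1) → ℂ) (rb : Fin (m + 1) → ℝ) (α : Fin (m + 1) → ℝ) (α₀ : ℝ)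
    (hα₀ : 0 < α₀) (hα₀' : α₀ ≤ Real.pi / 2)
    (hα : ∀ i, α₀ ≤ α i ∧ α i < Real.pi)
    (hrb : ∀ i, 0 < rb i)
    (hp : ∀ i, dist c (p i) = r)
    (hb : ∀ i, dist (p i) (b i) = rb i ∧ dist (p (i + 1)) (b i) = rb i)
    (hangle : ∀ i, EuclideanGeometry.angle c (p i) (b i) = α i ∧
      EuclideanGeometry.angle c (p (i + 1)) (b i) = α i)
    (hconvex : ∀ i, (segment ℝ c (b i) ∩ segment ℝ (p i) (p (i + 1))).Nonempty)
    (hsurround : ∀ u : ℂ, ∃ i : Fin (m + 1), ∃ s t : ℝ, 0 ≤ s ∧ 0 ≤ t ∧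
      u - c = s • (p i - c) + t • (p (i + 1) - c)) :
    (ball c (r * Real.sin α₀) ⊆
      closedBall c r ∩ ⋃ i : Fin (m + 1), convexHull ℝ {c, p i, b i, p (i + 1)}) ∧
    r ≤ (1 / Real.sin α₀) * (r * Real.sin α₀) :=
  interior_vertex_contains_inner_disc_general c r p b α α₀ hα₀ hα₀' hα hp hangle hconvex hsurround
end

section
/- The area of the lunar intersection of two discs: if B(r) and B(R) are discs of radii r and R whose centers are at distance d_c with |R − r| < d_c < R + r, then Area(B(r) ∩ B(R)) = r²·arccos((d_c² + r² − R²)/(2 r d_c)) + R²·arccos((d_c² + R² − r²)/(2 R d_c)) − (1/2)·√((r+R−d_c)(r+R+d_c)(d_c+r−R)(d_c−r+R)). -/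
/-!
Move the centres to `0` and `d` on the real axis by an isometry of `ℂ`. The common chord of the
two circles lies on the line `re z = x₀` with `x₀ = (d² + r² - R²) / (2d)`, and the lens is the
union of the two circular segments cut off by this line. By Cavalieri's principle the segment
`{re z ≥ a}` of the disc of radius `r` has area
`∫ₐʳ 2 √(r² - x²) dx = r² arccos (a / r) - a √(r² - a²)`, a sector minus a triangle. The two
triangles share the common chord, of half-length `h`, so together they have area `d h`; and
`d h / 2` is the area of the triangle formed by the two centres and an end of the chord, which
Heron's formula gives.
-/

open Real Metric MeasureTheory

theorem Isometry.volume_image {V : Type*} [NormedAddCommGroup V] [InnerProductSpace ℝ V]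
    [FiniteDimensional ℝ V] [MeasurableSpace V] [BorelSpace V] {f : V → V} (hf : Isometry f)
    (s : Set V) : volume (f '' s) = volume s := by
  rw [← InnerProductSpace.euclideanHausdorffMeasure_eq_volume]
  exact hf.euclideanHausdorffMeasure_image s

theorem Real.volume_setOf_sq_le (m : ℝ) :
    volume {y : ℝ | y ^ 2 ≤ m} = ENNReal.ofReal (2 * √m) := by
  rcases lt_or_ge m 0 with hm | hm
  · have : {y : ℝ | y ^ 2 ≤ m} = ∅ := Set.eq_empty_of_forall_notMem fun y hy => by
      nlinarith [sq_nonneg y, hy.out]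
    simp [this, sqrt_eq_zero'.mpr hm.le]
  · simp_rw [Real.sq_le hm]
    change volume (Set.Icc _ _) = _
    rw [volume_Icc]
    ring_nf

namespace Complex

theorem exists_isometryEquiv_map_eq_zero_map_eq_dist (z₁ z₂ : ℂ) :
    ∃ e : ℂ ≃ᵢ ℂ, e z₁ = 0 ∧ e z₂ = dist z₁ z₂ := by
  let a := Circle.exp (-arg (z₂ - z₁))
  refine ⟨(IsometryEquiv.subRight z₁).trans (rotation a).toIsometryEquiv, by simp, ?_⟩
  change (a : ℂ) * (z₂ - z₁) = _
  nth_rw 1 [← norm_mul_exp_arg_mul_I (z₂ - z₁)]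
  rw [Circle.coe_exp, mul_left_comm, ← Complex.exp_add, dist_comm, dist_eq]
  simp

theorem volume_closedBall_inter_closedBall_eq_ofReal_dist (z₁ z₂ : ℂ) (r R : ℝ) :
    volume (closedBall z₁ r ∩ closedBall z₂ R)
      = volume (closedBall 0 r ∩ closedBall (dist z₁ z₂ : ℂ) R) := by
  obtain ⟨e, he₁, he₂⟩ := exists_isometryEquiv_map_eq_zero_map_eq_dist z₁ z₂
  rw [← he₁, ← he₂, ← e.image_closedBall, ← e.image_closedBall, ← Set.image_inter e.injective,
    e.isometry.volume_image]

theorem closedBall_ofReal (x : ℝ) {r : ℝ} (hr : 0 ≤ r) :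
    closedBall (x : ℂ) r = {z : ℂ | (z.re - x) ^ 2 + z.im ^ 2 ≤ r ^ 2} := by
  ext z
  rw [mem_closedBall, dist_eq, ← sq_le_sq₀ (norm_nonneg _) hr, Complex.sq_norm, normSq_apply]
  simp [sq]

theorem volume_setOf_im_sq_le {m : ℝ → ℝ} (hm : Measurable m) :
    volume {z : ℂ | z.im ^ 2 ≤ m z.re} = ∫⁻ x, ENNReal.ofReal (2 * √(m x)) := by
  have hS : MeasurableSet {p : ℝ × ℝ | p.2 ^ 2 ≤ m p.1} :=
    measurableSet_le (by fun_prop) (hm.comp measurable_fst)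
  change volume (measurableEquivRealProd ⁻¹' {p : ℝ × ℝ | p.2 ^ 2 ≤ m p.1}) = _
  rw [volume_preserving_equiv_real_prod.measure_preimage hS.nullMeasurableSet,
    Measure.volume_eq_prod, Measure.prod_apply hS]
  simp_rw [← Real.volume_setOf_sq_le]
  rfl

end Complex

theorem hasDerivAt_sq_mul_arcsin_div_add_mul_sqrt {r x : ℝ} (hr : 0 < r)
    (hx : x ∈ Set.Ioo (-r) r) :
    HasDerivAt (fun x => r ^ 2 * arcsin (x / r) + x * √(r ^ 2 - x ^ 2))
      (2 * √(r ^ 2 - x ^ 2)) x := by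
  obtain ⟨hx₁, hx₂⟩ := hx
  have hpos : 0 < r ^ 2 - x ^ 2 := by nlinarith
  have harcsin : HasDerivAt arcsin (1 / √(1 - (x / r) ^ 2)) (x / r) :=
    hasDerivAt_arcsin (by rw [ne_eq, div_eq_iff hr.ne']; linarith)
      (by rw [ne_eq, div_eq_iff hr.ne']; linarith)
  have h := (harcsin.comp x ((hasDerivAt_id x).div_const r)).const_mul (r ^ 2) |>.add
    ((hasDerivAt_id x).mul (((hasDerivAt_pow 2 x).const_sub (r ^ 2)).sqrt hpos.ne'))
  have hsqrt : √(1 - (x / r) ^ 2) = √(r ^ 2 - x ^ 2) / r := by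
    rw [← sqrt_sq hr.le, ← sqrt_div' _ (sq_nonneg r), sqrt_sq hr.le]
    field_simp
  refine h.congr_deriv ?_
  rw [hsqrt]
  field_simp
  simp only [id, sq_sqrt hpos.le]
  ring

theorem integral_two_mul_sqrt_sq_sub_sq {r a : ℝ} (hr : 0 < r) (ha : -r ≤ a) (ha' : a ≤ r) :
    ∫ x in a..r, 2 * √(r ^ 2 - x ^ 2) = r ^ 2 * arccos (a / r) - a * √(r ^ 2 - a ^ 2) := by
  rw [intervalIntegral.integral_eq_sub_of_hasDerivAt_of_le ha' (by fun_prop)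
    (fun x hx => hasDerivAt_sq_mul_arcsin_div_add_mul_sqrt hr ⟨ha.trans_lt hx.1, hx.2⟩)
    (Continuous.intervalIntegrable (by fun_prop) _ _), arccos_eq_pi_div_two_sub_arcsin]
  simp [div_self hr.ne']
  ring

section Lens

variable {r R d x : ℝ}

noncomputable def lensChordLength (r R d x : ℝ) : ℝ :=
  2 * √(min (r ^ 2 - x ^ 2) (R ^ 2 - (x - d) ^ 2))

/-- The abscissa of the radical axis of the circles of radii `r` and `R` centred at `0` and `d`,
which carries their common chord. -/
noncomputable def radicalAbscissa (r R d : ℝ) : ℝ := (d ^ 2 + r ^ 2 - R ^ 2) / (2 * d)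

theorem lensChordLength_nonneg (r R d x : ℝ) : 0 ≤ lensChordLength r R d x := by
  unfold lensChordLength; positivity

theorem continuous_lensChordLength (r R d : ℝ) : Continuous (lensChordLength r R d) := by
  unfold lensChordLength; fun_prop

theorem lensChordLength_eq_zero_of_notMem (hr : 0 ≤ r) (hR : 0 ≤ R)
    (hx : x ∉ Set.Icc (d - R) r) : lensChordLength r R d x = 0 := by
  rw [lensChordLength, mul_eq_zero, sqrt_eq_zero', min_le_iff]
  right
  rcases not_and_or.mp hx with h | h
  · right; nlinarith
  · left; nlinarith

theorem integrable_lensChordLength (hr : 0 ≤ r) (hR : 0 ≤ R) :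
    Integrable (lensChordLength r R d) :=
  (continuous_lensChordLength r R d).integrable_of_hasCompactSupport <|
    HasCompactSupport.intro isCompact_Icc fun _ => lensChordLength_eq_zero_of_notMem hr hR

theorem closedBall_zero_inter_closedBall_ofReal (hr : 0 ≤ r) (hR : 0 ≤ R) :
    closedBall (0 : ℂ) r ∩ closedBall (d : ℂ) R
      = {z : ℂ | z.im ^ 2 ≤ min (r ^ 2 - z.re ^ 2) (R ^ 2 - (z.re - d) ^ 2)} := by
  rw [← Complex.ofReal_zero, Complex.closedBall_ofReal _ hr, Complex.closedBall_ofReal _ hR]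
  ext z
  simp only [Set.mem_inter_iff, Set.mem_ofPred_eq, le_min_iff, sub_zero]
  constructor <;> rintro ⟨h₁, h₂⟩ <;> constructor <;> linarith

theorem volume_closedBall_zero_inter_closedBall_ofReal (hr : 0 ≤ r) (hR : 0 ≤ R) :
    volume (closedBall (0 : ℂ) r ∩ closedBall (d : ℂ) R)
      = ENNReal.ofReal (∫ x, lensChordLength r R d x) := by
  rw [closedBall_zero_inter_closedBall_ofReal hr hR,
    ofReal_integral_eq_lintegral_ofReal (integrable_lensChordLength hr hR)
      (.of_forall (lensChordLength_nonneg r R d))]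
  exact Complex.volume_setOf_im_sq_le (m := fun x => min (r ^ 2 - x ^ 2) (R ^ 2 - (x - d) ^ 2))
    (by fun_prop)

theorem lensChordLength_of_radicalAbscissa_le (hd : 0 < d) (hx : radicalAbscissa r R d ≤ x) :
    lensChordLength r R d x = 2 * √(r ^ 2 - x ^ 2) := by
  rw [radicalAbscissa, div_le_iff₀ (by positivity)] at hx
  rw [lensChordLength, min_eq_left (by nlinarith)]

theorem lensChordLength_of_le_radicalAbscissa (hd : 0 < d) (hx : x ≤ radicalAbscissa r R d) :
    lensChordLength r R d x = 2 * √(R ^ 2 - (x - d) ^ 2) := by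
  rw [radicalAbscissa, le_div_iff₀ (by positivity)] at hx
  rw [lensChordLength, min_eq_right (by nlinarith)]

theorem radicalAbscissa_add_radicalAbscissa (hd : d ≠ 0) :
    radicalAbscissa r R d + radicalAbscissa R r d = d := by
  unfold radicalAbscissa; field_simp; ring

theorem radicalAbscissa_div (r R d : ℝ) :
    radicalAbscissa r R d / r = (d ^ 2 + r ^ 2 - R ^ 2) / (2 * r * d) := by
  unfold radicalAbscissa; ring

theorem sq_sub_radicalAbscissa_sq_comm (hd : d ≠ 0) :
    r ^ 2 - radicalAbscissa r R d ^ 2 = R ^ 2 - radicalAbscissa R r d ^ 2 := by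
  unfold radicalAbscissa; field_simp; ring

/-- Heron's formula for the triangle formed by the two centres and an end of the common chord. -/
theorem mul_sqrt_sq_sub_radicalAbscissa_sq (hd : 0 < d) :
    d * √(r ^ 2 - radicalAbscissa r R d ^ 2)
      = 1 / 2 * √((r + R - d) * (r + R + d) * (d + r - R) * (d - r + R)) := by
  have hsq : r ^ 2 - radicalAbscissa r R d ^ 2
      = (r + R - d) * (r + R + d) * (d + r - R) * (d - r + R) / (2 * d) ^ 2 := by
    unfold radicalAbscissa; field_simp; ring
  rw [hsq, sqrt_div' _ (sq_nonneg _), sqrt_sq (by positivity)]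
  field_simp

theorem integral_lensChordLength_eq_add (hr : 0 ≤ r) (hR : 0 ≤ R) (hd : 0 < d)
    (h₀ : d - R ≤ radicalAbscissa r R d) (h₀' : radicalAbscissa r R d ≤ r) :
    ∫ x, lensChordLength r R d x
      = (∫ x in radicalAbscissa r R d..r, 2 * √(r ^ 2 - x ^ 2))
        + ∫ x in radicalAbscissa R r d..R, 2 * √(R ^ 2 - x ^ 2) := by
  set x₀ := radicalAbscissa r R d
  have hint : ∀ a b, IntervalIntegrable (lensChordLength r R d) volume a b :=
    (continuous_lensChordLength r R d).intervalIntegrable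
  rw [← setIntegral_eq_integral_of_forall_compl_eq_zero
      fun x => lensChordLength_eq_zero_of_notMem hr hR,
    integral_Icc_eq_integral_Ioc, ← intervalIntegral.integral_of_le (h₀.trans h₀'),
    ← intervalIntegral.integral_add_adjacent_intervals (hint _ x₀) (hint x₀ _), add_comm]
  congr 1
  · refine intervalIntegral.integral_congr fun x hx => ?_
    rw [Set.uIcc_of_le h₀'] at hx
    exact lensChordLength_of_radicalAbscissa_le hd hx.1
  · have reflect := intervalIntegral.integral_comp_sub_left (fun x => 2 * √(R ^ 2 - x ^ 2)) d
      (a := d - R) (b := x₀)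
    rw [sub_sub_cancel, ← eq_sub_of_add_eq' (radicalAbscissa_add_radicalAbscissa hd.ne')] at reflect
    rw [← reflect]
    refine intervalIntegral.integral_congr fun x hx => ?_
    rw [Set.uIcc_of_le h₀] at hx
    simp only [lensChordLength_of_le_radicalAbscissa hd hx.2]
    ring_nf

theorem integral_lensChordLength (h₁ : |R - r| < d) (h₂ : d < R + r) :
    ∫ x, lensChordLength r R d x
      = r ^ 2 * arccos ((d ^ 2 + r ^ 2 - R ^ 2) / (2 * r * d))
        + R ^ 2 * arccos ((d ^ 2 + R ^ 2 - r ^ 2) / (2 * R * d))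
        - (1 / 2) * √((r + R - d) * (r + R + d) * (d + r - R) * (d - r + R)) := by
  obtain ⟨hRr, hrR⟩ := abs_lt.mp h₁
  have hr : 0 < r := by linarith
  have hR : 0 < R := by linarith
  have hd : 0 < d := by linarith
  have hx₀ : -r < radicalAbscissa r R d ∧ radicalAbscissa r R d < r := by
    unfold radicalAbscissa
    rw [lt_div_iff₀ (by positivity), div_lt_iff₀ (by positivity)]
    constructor <;> nlinarith
  have hx₁ : -R < radicalAbscissa R r d ∧ radicalAbscissa R r d < R := by
    unfold radicalAbscissa
    rw [lt_div_iff₀ (by positivity), div_lt_iff₀ (by positivity)]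
    constructor <;> nlinarith
  have hsum := radicalAbscissa_add_radicalAbscissa (r := r) (R := R) hd.ne'
  rw [integral_lensChordLength_eq_add hr.le hR.le hd (by linarith) hx₀.2.le,
    integral_two_mul_sqrt_sq_sub_sq hr hx₀.1.le hx₀.2.le,
    integral_two_mul_sqrt_sq_sub_sq hR hx₁.1.le hx₁.2.le, radicalAbscissa_div, radicalAbscissa_div,
    ← sq_sub_radicalAbscissa_sq_comm (r := r) (R := R) hd.ne',
    ← mul_sqrt_sq_sub_radicalAbscissa_sq hd]
  linear_combination (-√(r ^ 2 - radicalAbscissa r R d ^ 2)) * hsum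

end Lens

theorem lune_area_formula_general
    (z₁ z₂ : ℂ) (r R d : ℝ)
    (hd : dist z₁ z₂ = d) (h₁ : |R - r| < d) (h₂ : d < R + r) :
    (volume (closedBall z₁ r ∩ closedBall z₂ R)).toReal =
      r ^ 2 * Real.arccos ((d ^ 2 + r ^ 2 - R ^ 2) / (2 * r * d))
      + R ^ 2 * Real.arccos ((d ^ 2 + R ^ 2 - r ^ 2) / (2 * R * d))
      - (1 / 2) * Real.sqrt ((r + R - d) * (r + R + d) * (d + r - R) * (d - r + R)) := by
  obtain ⟨hRr, hrR⟩ := abs_lt.mp h₁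
  rw [Complex.volume_closedBall_inter_closedBall_eq_ofReal_dist, hd,
    volume_closedBall_zero_inter_closedBall_ofReal (by linarith) (by linarith),
    ENNReal.toReal_ofReal (integral_nonneg (lensChordLength_nonneg r R d)),
    integral_lensChordLength h₁ h₂]

/-- Area of the lunar intersection of two discs: if discs of radii `r`, `R`
have centers at distance `d_c` with `|R − r| < d_c < R + r`, then
`Area(B(r) ∩ B(R)) = r²·arccos((d_c²+r²−R²)/(2 r d_c)) + R²·arccos((d_c²+R²−r²)/(2 R d_c))
 − (1/2)·√((r+R−d_c)(r+R+d_c)(d_c+r−R)(d_c−r+R))`. -/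
theorem lune_area_formula
    (z₁ z₂ : ℂ) (r R d : ℝ) (hr : 0 < r) (hR : 0 < R)
    (hd : dist z₁ z₂ = d) (h₁ : |R - r| < d) (h₂ : d < R + r) :
    (volume (closedBall z₁ r ∩ closedBall z₂ R)).toReal =
      r ^ 2 * Real.arccos ((d ^ 2 + r ^ 2 - R ^ 2) / (2 * r * d))
      + R ^ 2 * Real.arccos ((d ^ 2 + R ^ 2 - r ^ 2) / (2 * R * d))
      - (1 / 2) * Real.sqrt ((r + R - d) * (r + R + d) * (d + r - R) * (d - r + R)) :=
  lune_area_formula_general z₁ z₂ r R d hd h₁ h₂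
end

section
/- Let B(v) be a disc of radius r and 𝔹(R) a disc of radius R with centers at distance d_c ≥ r, whose boundary circles intersect. If Area(B(v) ∩ 𝔹(R)) ≤ (π/3)·r², then d_c > R and there is an absolute constant C₂ > 0 such that R + r − d_c ≤ C₂·r; moreover the half-angle γ = arccos((d_c² + r² − R²)/(2 r d_c)) of the circular sector of B(v) containing the lune satisfies γ ≤ γ_max for some absolute constant γ_max < π/2. -/
/-!
Put the centres at `0` and `d > 0` on the real axis. The radical axis of the two circles is the
line `re = t` with `2 d t = d² + r² - R²`; the part of the small disc to its right lies in the big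
disc and the part of the big disc to its left lies in the small one. Hence the lens contains the
region between two parabolas through the intersection points `(t, ±h)` of the circles, with
apices at the extreme points `d - R` and `r` of the lens, of area `4/3 (r + R - d) h`
(Archimedes); if `t ≤ r/20`, already the part right of `re = max t 0` is too large. Once
`t > r/20`, `R ≥ d` would force `t ≤ r/2`, so `h ≥ (√3/2) r` and `r + R - d ≥ r`, giving area
at least `(2/√3) r² > (π/3) r²`. So `R < d`, `R + r - d < r`, and `cos γ = t / r > 1/20`.
-/

open Real Metric MeasureTheory Set

/-- The region between the parabolas with apices `(a, 0)` and `(b, 0)` through `(s, ±h)`. -/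
def parabolicLens (a s b h : ℝ) : Set ℂ :=
  {u | |u.im| < h ∧ a + (s - a) * (u.im / h) ^ 2 < u.re ∧ u.re < b + (s - b) * (u.im / h) ^ 2}

lemma measurePreserving_im_re :
    MeasurePreserving (fun z : ℂ => (z.im, z.re)) volume ((volume : Measure ℝ).prod volume) :=
  Measure.measurePreserving_swap.comp
    (Measure.volume_eq_prod ℝ ℝ ▸ Complex.volume_preserving_equiv_real_prod)

theorem volume_parabolicLens {a s b h : ℝ} (hh : 0 < h) (hab : a ≤ b) :
    volume (parabolicLens a s b h) = ENNReal.ofReal (4 / 3 * (b - a) * h) := by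
  set f : ℝ → ℝ := fun y => a + (s - a) * (y / h) ^ 2
  set g : ℝ → ℝ := fun y => b + (s - b) * (y / h) ^ 2
  have hf : Continuous f := by fun_prop
  have hg : Continuous g := by fun_prop
  have hpre : parabolicLens a s b h =
      (fun z : ℂ => (z.im, z.re)) ⁻¹' regionBetween f g (Ioo (-h) h) := by
    ext u
    simp only [parabolicLens, mem_ofPred_eq, mem_preimage, regionBetween, mem_Ioo, abs_lt, f, g]
  have hfg : ∀ y ∈ Ioo (-h) h, f y ≤ g y := by
    intro y hy
    have : (y / h) ^ 2 ≤ 1 := by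
      rw [div_pow, div_le_one (by positivity)]
      exact sq_le_sq' hy.1.le hy.2.le
    simp only [f, g]
    nlinarith
  rw [hpre, measurePreserving_im_re.measure_preimage
      (measurableSet_regionBetween hf.measurable hg.measurable measurableSet_Ioo).nullMeasurableSet,
    volume_regionBetween_eq_integral (hf.integrableOn_Icc.mono_set Ioo_subset_Icc_self)
      (hg.integrableOn_Icc.mono_set Ioo_subset_Icc_self) measurableSet_Ioo hfg,
    ← integral_Ioc_eq_integral_Ioo, ← intervalIntegral.integral_of_le (by linarith)]
  congr 1
  have hgf : g - f = fun y => (b - a) - (b - a) / h ^ 2 * y ^ 2 := by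
    ext y; simp only [Pi.sub_apply, f, g]; field_simp; ring
  rw [hgf, intervalIntegral.integral_sub intervalIntegrable_const
      ((intervalIntegral.intervalIntegrable_pow 2).const_mul _),
    intervalIntegral.integral_const, intervalIntegral.integral_const_mul, integral_pow]
  field_simp
  ring

lemma sq_add_le_of_mem_uIcc_parabola {c ρ a s h q x : ℝ} (ha : (a - c) ^ 2 = ρ ^ 2)
    (hs : (s - c) ^ 2 + h ^ 2 = ρ ^ 2) (hq₀ : 0 ≤ q) (hq₁ : q ≤ 1)
    (hx : x ∈ uIcc s (a + (s - a) * q)) : (x - c) ^ 2 + q * h ^ 2 ≤ ρ ^ 2 := by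
  set p := a + (s - a) * q
  have hchord : (s - c) ^ 2 + q * h ^ 2 ≤ ρ ^ 2 := by nlinarith
  have hapex : (p - c) ^ 2 + q * h ^ 2 ≤ ρ ^ 2 := by
    nlinarith [mul_nonneg (mul_nonneg hq₀ (sub_nonneg.2 hq₁)) (sq_nonneg (s - a))]
  have hmax : |x - c| ≤ max |s - c| |p - c| := by
    rcases mem_uIcc.1 hx with ⟨h₁, h₂⟩ | ⟨h₁, h₂⟩
    · exact abs_le_max_abs_abs (by linarith) (by linarith)
    · exact max_comm |s - c| _ ▸ abs_le_max_abs_abs (by linarith) (by linarith)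
  rcases le_max_iff.1 hmax with h | h <;> nlinarith [sq_le_sq.2 h]

lemma mem_closedBall_ofReal_iff {c ρ : ℝ} (hρ : 0 ≤ ρ) {u : ℂ} :
    u ∈ closedBall (c : ℂ) ρ ↔ (u.re - c) ^ 2 + u.im ^ 2 ≤ ρ ^ 2 := by
  rw [mem_closedBall, Complex.dist_eq, ← sq_le_sq₀ (norm_nonneg _) hρ, Complex.sq_norm,
    Complex.normSq_apply]
  simp only [Complex.sub_re, Complex.sub_im, Complex.ofReal_re, Complex.ofReal_im, sub_zero, sq]

lemma mem_closedBall_of_re_mem_uIcc {c ρ e s h : ℝ} (hρ : 0 ≤ ρ) (he : (e - c) ^ 2 = ρ ^ 2)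
    (hs : (s - c) ^ 2 + h ^ 2 = ρ ^ 2) {u : ℂ} (him : |u.im| < h)
    (hre : u.re ∈ uIcc s (e + (s - e) * (u.im / h) ^ 2)) : u ∈ closedBall (c : ℂ) ρ := by
  have hh : 0 < h := (abs_nonneg _).trans_lt him
  have hq : (u.im / h) ^ 2 ≤ 1 := by
    rw [div_pow, div_le_one (by positivity)]
    exact sq_lt_sq' (abs_lt.1 him).1 (abs_lt.1 him).2 |>.le
  have := sq_add_le_of_mem_uIcc_parabola he hs (sq_nonneg _) hq hre
  rw [mem_closedBall_ofReal_iff hρ]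
  field_simp at this
  linarith

lemma mem_closedBall_of_le_re {r R d t : ℝ} (hr : 0 ≤ r) (hR : 0 ≤ R) (hd : 0 < d)
    (ht : d ^ 2 + r ^ 2 - R ^ 2 = 2 * d * t) {u : ℂ} (hu : u ∈ closedBall (0 : ℂ) r)
    (htu : t ≤ u.re) : u ∈ closedBall (d : ℂ) R := by
  rw [← Complex.ofReal_zero, mem_closedBall_ofReal_iff hr] at hu
  rw [mem_closedBall_ofReal_iff hR]
  nlinarith

lemma mem_closedBall_zero_of_re_le {r R d t : ℝ} (hr : 0 ≤ r) (hR : 0 ≤ R) (hd : 0 < d)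
    (ht : d ^ 2 + r ^ 2 - R ^ 2 = 2 * d * t) {u : ℂ} (hu : u ∈ closedBall (d : ℂ) R)
    (hut : u.re ≤ t) : u ∈ closedBall (0 : ℂ) r := by
  rw [mem_closedBall_ofReal_iff hR] at hu
  rw [← Complex.ofReal_zero, mem_closedBall_ofReal_iff hr]
  nlinarith

lemma parabolicLens_subset_closedBall_inter {r R d t h : ℝ} (hr : 0 ≤ r) (hR : 0 ≤ R)
    (hd : 0 < d) (ht : d ^ 2 + r ^ 2 - R ^ 2 = 2 * d * t) (hth : t ^ 2 + h ^ 2 = r ^ 2) :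
    parabolicLens (d - R) t r h ⊆ closedBall (0 : ℂ) r ∩ closedBall (d : ℂ) R := by
  rintro u ⟨him, hleft, hright⟩
  rcases le_total t u.re with htu | hut
  · have hu : u ∈ closedBall (0 : ℂ) r := by
      rw [← Complex.ofReal_zero]
      exact mem_closedBall_of_re_mem_uIcc hr (by ring) (by simpa using hth) him
        (mem_uIcc.2 (Or.inl ⟨htu, hright.le⟩))
    exact ⟨hu, mem_closedBall_of_le_re hr hR hd ht hu htu⟩
  · have hu : u ∈ closedBall (d : ℂ) R :=
      mem_closedBall_of_re_mem_uIcc hR (by ring) (by nlinarith) him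
        (mem_uIcc.2 (Or.inr ⟨hleft.le, hut⟩))
    exact ⟨mem_closedBall_zero_of_re_le hr hR hd ht hu hut, hu⟩

lemma parabolicLens_subset_closedBall_inter_of_le {r R d t s h : ℝ} (hr : 0 ≤ r)
    (hR : 0 ≤ R) (hd : 0 < d) (ht : d ^ 2 + r ^ 2 - R ^ 2 = 2 * d * t) (hts : t ≤ s)
    (hsh : s ^ 2 + h ^ 2 = r ^ 2) :
    parabolicLens s s r h ⊆ closedBall (0 : ℂ) r ∩ closedBall (d : ℂ) R := by
  rintro u ⟨him, hleft, hright⟩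
  rw [sub_self, zero_mul, add_zero] at hleft
  have hu : u ∈ closedBall (0 : ℂ) r := by
    rw [← Complex.ofReal_zero]
    exact mem_closedBall_of_re_mem_uIcc hr (by ring) (by simpa using hsh) him
      (mem_uIcc.2 (Or.inl ⟨hleft.le, hright.le⟩))
  exact ⟨hu, mem_closedBall_of_le_re hr hR hd ht hu (hts.trans hleft.le)⟩

lemma le_toReal_of_parabolicLens_subset {a s b h : ℝ} {T : Set ℂ} (hh : 0 < h) (hab : a ≤ b)
    (hsub : parabolicLens a s b h ⊆ T) (hT : volume T ≠ ⊤) :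
    4 / 3 * (b - a) * h ≤ (volume T).toReal :=
  (ENNReal.ofReal_le_iff_le_toReal hT).1 (volume_parabolicLens hh hab ▸ measure_mono hsub)

lemma volume_closedBall_inter_closedBall_eq (z₁ z₂ : ℂ) (r R : ℝ) :
    volume (closedBall z₁ r ∩ closedBall z₂ R)
      = volume (closedBall (0 : ℂ) r ∩ closedBall (dist z₁ z₂ : ℂ) R) := by
  set c := Circle.exp (Complex.arg (z₂ - z₁))
  set φ : ℂ → ℂ := fun u => z₁ + rotation c u
  have hφ : MeasurePreserving φ volume volume :=
    (measurePreserving_add_left volume z₁).comp (rotation c).measurePreserving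
  have hiso : Isometry φ := (isometry_add_left z₁).comp (rotation c).isometry
  have h₁ : φ 0 = z₁ := by simp [φ]
  have h₂ : φ (dist z₁ z₂) = z₂ := by
    simp only [φ, rotation_apply, c, Circle.coe_exp, dist_comm z₁, Complex.dist_eq]
    rw [mul_comm, Complex.norm_mul_exp_arg_mul_I, add_sub_cancel]
  have hpre : φ ⁻¹' (closedBall z₁ r ∩ closedBall z₂ R)
      = closedBall (0 : ℂ) r ∩ closedBall (dist z₁ z₂ : ℂ) R := by
    conv_lhs => rw [← h₁, ← h₂]
    rw [preimage_inter, hiso.preimage_closedBall, hiso.preimage_closedBall]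
  rw [← hpre, hφ.measure_preimage
    (measurableSet_closedBall.inter measurableSet_closedBall).nullMeasurableSet]

lemma volume_closedBall_inter_ne_top (x y : ℂ) (r R : ℝ) :
    volume (closedBall x r ∩ closedBall y R) ≠ ⊤ :=
  ((measure_mono inter_subset_left).trans_lt measure_closedBall_lt_top).ne

lemma radical_axis_gt_of_volume_inter_le {r R d t : ℝ} (hr : 0 < r) (hR : 0 ≤ R) (hd : 0 < d)
    (ht : d ^ 2 + r ^ 2 - R ^ 2 = 2 * d * t)
    (harea : (volume (closedBall (0 : ℂ) r ∩ closedBall (d : ℂ) R)).toReal ≤ π / 3 * r ^ 2) :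
    r / 20 < t := by
  by_contra! htr
  set s := max t 0
  have hs₀ : 0 ≤ s := le_max_right _ _
  have hsr : s ≤ r / 20 := max_le htr (by positivity)
  set h := √(r ^ 2 - s ^ 2)
  have hh2 : h ^ 2 = r ^ 2 - s ^ 2 := sq_sqrt (by nlinarith)
  have hh : 0 < h := sqrt_pos.2 (by nlinarith)
  have harea' := (le_toReal_of_parabolicLens_subset hh (by linarith)
    (parabolicLens_subset_closedBall_inter_of_le hr.le hR hd ht (le_max_left _ _) (by linarith))
    (volume_closedBall_inter_ne_top _ _ _ _)).trans harea
  have hh' : 0.99 * r < h := by nlinarith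
  nlinarith [pi_lt_d2]

lemma radius_lt_dist_of_volume_inter_le {r R d t : ℝ} (hr : 0 < r) (hrd : r ≤ d)
    (ht : d ^ 2 + r ^ 2 - R ^ 2 = 2 * d * t) (htr : r / 20 < t)
    (harea : (volume (closedBall (0 : ℂ) r ∩ closedBall (d : ℂ) R)).toReal ≤ π / 3 * r ^ 2) :
    R < d := by
  by_contra! hdR
  have hd : 0 < d := hr.trans_le hrd
  have htr' : t ≤ r / 2 := by nlinarith
  set h := √(r ^ 2 - t ^ 2)
  have hh2 : h ^ 2 = r ^ 2 - t ^ 2 := sq_sqrt (by nlinarith)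
  have hh : 0 < h := sqrt_pos.2 (by nlinarith)
  have harea' := (le_toReal_of_parabolicLens_subset hh (by linarith)
    (parabolicLens_subset_closedBall_inter hr.le (by linarith) hd ht (by linarith))
    (volume_closedBall_inter_ne_top _ _ _ _)).trans harea
  have hh' : 0.86 * r < h := by nlinarith
  nlinarith [pi_lt_d2]

/-- If a disc `B(v)` of radius `r` and a disc `𝔹(R)` of radius `R` have
centers at distance `d_c ≥ r`, their boundary circles intersect, and
`Area(B(v) ∩ 𝔹(R)) ≤ (π/3)·r²`, then `d_c > R`, and there are absolute constants `C₂ > 0` and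
`γ_max < π/2` such that `R + r − d_c ≤ C₂·r` and the half-angle
`γ = arccos((d_c²+r²−R²)/(2 r d_c))` satisfies `γ ≤ γ_max`. -/
theorem small_lune_geometry :
    ∃ C₂ : ℝ, 0 < C₂ ∧ ∃ γmax : ℝ, γmax < Real.pi / 2 ∧
      ∀ (z₁ z₂ : ℂ) (r R : ℝ), 0 < r → 0 < R → r ≤ dist z₁ z₂ →
        |R - r| < dist z₁ z₂ → dist z₁ z₂ < R + r →
        (volume (closedBall z₁ r ∩ closedBall z₂ R)).toReal ≤ Real.pi / 3 * r ^ 2 →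
        R < dist z₁ z₂ ∧
        R + r - dist z₁ z₂ ≤ C₂ * r ∧
        Real.arccos (((dist z₁ z₂) ^ 2 + r ^ 2 - R ^ 2) / (2 * r * dist z₁ z₂)) ≤ γmax := by
  refine ⟨1, one_pos, arccos (1 / 20), arccos_lt_pi_div_two.2 (by norm_num), ?_⟩
  intro z₁ z₂ r R hr hR hrd _ _ harea
  rw [volume_closedBall_inter_closedBall_eq] at harea
  set d := dist z₁ z₂
  have hd : 0 < d := hr.trans_le hrd
  set t := (d ^ 2 + r ^ 2 - R ^ 2) / (2 * d)
  have ht : d ^ 2 + r ^ 2 - R ^ 2 = 2 * d * t := by simp only [t]; field_simp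
  have htr := radical_axis_gt_of_volume_inter_le hr hR.le hd ht harea
  have hRd := radius_lt_dist_of_volume_inter_le hr hrd ht htr harea
  refine ⟨hRd, by linarith, arccos_le_arccos ?_⟩
  rw [le_div_iff₀ (by positivity)]
  nlinarith
end

section
/- Subharmonicity of the radius ratio: Let 𝒞 and 𝒞̃ be two immersed circle patterns for the same finite graph G and the same admissible labelling α : E(G) → (0,π), with radius functions r, r̃, and assume all kites of both patterns are convex. Define u(v) = r̃(v)/r(v) and the Laplacian Δu(v₀) = Σ_{[v₀,v]∈E} μ([v₀,v])·(u(v) − u(v₀)) with μ([v₀,v]) = 2 f'_{α([v₀,v])}(log r(v) − log r(v₀)). Then Δu(v₀) ≥ 0 at every interior vertex v₀. -/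
/-!
In the variable `s = r(v)/r(v₀)` the kite angle `F_θ(s) = f_θ(log s)` has derivative
`sin θ / (s² - 2 s cos θ + 1) = sin θ / |s - e^{iθ}|²`, which decreases once `s ≥ cos θ`.
Convexity of the kites puts both ratios in that range, so `F_θ` lies below its tangent there:
`F_θ(s̃) - F_θ(s) ≤ F_θ'(s) (s̃ - s)`, and `2 u(v₀) F_θ'(s) (s̃ - s)` is exactly the edge term
`μ (u(v) - u(v₀))`. Summing over the neighbours of `v₀`, the closing conditions make the left-hand
sides add up to `π - π = 0`.
-/

open Real Finset

theorem image_sub_le_deriv_mul_sub_of_antitoneOn {D : Set ℝ} (hD : Convex ℝ D) {F F' : ℝ → ℝ}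
    (hF : ∀ s ∈ D, HasDerivAt F (F' s) s) (hF' : AntitoneOn F' D) {a b : ℝ}
    (ha : a ∈ D) (hb : b ∈ D) : F b - F a ≤ F' a * (b - a) := by
  have hcont : ContinuousOn F D := fun s hs => (hF s hs).continuousAt.continuousWithinAt
  have hdiff {I : Set ℝ} (hI : I ⊆ D) : DifferentiableOn ℝ F (interior I) := fun s hs =>
    (hF s (hI (interior_subset hs))).differentiableAt.differentiableWithinAt
  rcases le_total a b with hab | hba
  · have hI : Set.Icc a b ⊆ D := hD.ordConnected.out ha hb
    refine (convex_Icc a b).image_sub_le_mul_sub_of_deriv_le (hcont.mono hI) (hdiff hI)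
      (fun s hs => ?_) a (Set.left_mem_Icc.2 hab) b (Set.right_mem_Icc.2 hab) hab
    rw [interior_Icc] at hs
    rw [(hF s (hI (Set.Ioo_subset_Icc_self hs))).deriv]
    exact hF' ha (hI (Set.Ioo_subset_Icc_self hs)) hs.1.le
  · have hI : Set.Icc b a ⊆ D := hD.ordConnected.out hb ha
    have := (convex_Icc b a).mul_sub_le_image_sub_of_le_deriv (C := F' a) (hcont.mono hI)
      (hdiff hI) (fun s hs => ?_) b (Set.left_mem_Icc.2 hba) a (Set.right_mem_Icc.2 hba) hba
    · linarith
    rw [interior_Icc] at hs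
    rw [(hF s (hI (Set.Ioo_subset_Icc_self hs))).deriv]
    exact hF' (hI (Set.Ioo_subset_Icc_self hs)) ha hs.2.le

noncomputable def kiteAngleDeriv (θ s : ℝ) : ℝ := sin θ / (s ^ 2 - 2 * s * cos θ + 1)

theorem sq_sub_two_mul_mul_cos_add_one_pos {θ : ℝ} (hθ : sin θ ≠ 0) (s : ℝ) :
    0 < s ^ 2 - 2 * s * cos θ + 1 := by
  nlinarith [sin_sq_add_cos_sq θ, sq_nonneg (s - cos θ), sq_pos_of_ne_zero hθ]

theorem cosh_log_sub_cos {s : ℝ} (hs : 0 < s) (θ : ℝ) :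
    cosh (log s) - cos θ = (s ^ 2 - 2 * s * cos θ + 1) / (2 * s) := by
  rw [cosh_log hs]
  field_simp
  ring

theorem antitoneOn_kiteAngleDeriv {θ : ℝ} (hθ : 0 < sin θ) :
    AntitoneOn (kiteAngleDeriv θ) (Set.Ici (cos θ)) := by
  intro s hs t ht hst
  apply div_le_div_of_nonneg_left hθ.le (sq_sub_two_mul_mul_cos_add_one_pos hθ.ne' s)
  nlinarith [Set.mem_Ici.1 hs]

theorem hasDerivAt_comp_log {θ : ℝ} {f : ℝ → ℝ}
    (hf : ∀ x, HasDerivAt f (sin θ / (2 * (cosh x - cos θ))) x) {s : ℝ} (hs : 0 < s) :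
    HasDerivAt (fun s => f (log s)) (kiteAngleDeriv θ s) s := by
  refine ((hf (log s)).comp s (hasDerivAt_log hs.ne')).congr_deriv ?_
  rw [kiteAngleDeriv, cosh_log_sub_cos hs]
  field_simp

theorem two_mul_sub_le_kite_weight_mul {θ : ℝ} (hθ : θ ∈ Set.Ioo 0 π) {f : ℝ → ℝ}
    (hf : ∀ x, HasDerivAt f (sin θ / (2 * (cosh x - cos θ))) x) {a a₀ b b₀ : ℝ}
    (ha : 0 < a) (ha₀ : 0 < a₀) (hb : 0 < b) (hb₀ : 0 < b₀)
    (hconv : cos θ ≤ a / a₀) (hconvt : cos θ ≤ b / b₀) :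
    2 * (b₀ / a₀) * (f (log b - log b₀) - f (log a - log a₀)) ≤
      sin θ / (cosh (log a - log a₀) - cos θ) * (b / a - b₀ / a₀) := by
  have hsin : 0 < sin θ := sin_pos_of_pos_of_lt_pi hθ.1 hθ.2
  set s := a / a₀ with hs
  set t := b / b₀ with ht
  have hs0 : 0 < s := div_pos ha ha₀
  have htangent : f (log t) - f (log s) ≤ kiteAngleDeriv θ s * (t - s) :=
    image_sub_le_deriv_mul_sub_of_antitoneOn ((convex_Ioi 0).inter (convex_Ici (cos θ)))
      (fun x hx => hasDerivAt_comp_log hf hx.1) ((antitoneOn_kiteAngleDeriv hsin).mono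
      Set.inter_subset_right) ⟨hs0, hconv⟩ ⟨div_pos hb hb₀, hconvt⟩
  rw [← log_div ha.ne' ha₀.ne', ← log_div hb.ne' hb₀.ne', cosh_log_sub_cos hs0]
  calc 2 * (b₀ / a₀) * (f (log t) - f (log s))
      ≤ 2 * (b₀ / a₀) * (kiteAngleDeriv θ s * (t - s)) := by gcongr
    _ = sin θ / ((s ^ 2 - 2 * s * cos θ + 1) / (2 * s)) * (b / a - b₀ / a₀) := by
      rw [kiteAngleDeriv, hs, ht]
      field_simp

theorem radius_ratio_subharmonic_general
    {V : Type*} [Fintype V] (G : SimpleGraph V) [DecidableRel G.Adj]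
    (boundary : Set V)
    (α : V → V → ℝ)
    (hα : ∀ u v, G.Adj u v → α u v ∈ Set.Ioo 0 Real.pi)
    (f : ℝ → ℝ → ℝ)
    (hf : ∀ θ ∈ Set.Ioo 0 Real.pi, ∀ x : ℝ,
      HasDerivAt (f θ) (Real.sin θ / (2 * (Real.cosh x - Real.cos θ))) x)
    (r rt : V → ℝ) (hr : ∀ v, 0 < r v) (hrt : ∀ v, 0 < rt v)
    (hclose : ∀ v₀, v₀ ∉ boundary →
      ∑ v ∈ G.neighborFinset v₀, f (α v₀ v) (Real.log (r v) - Real.log (r v₀)) = Real.pi)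
    (hcloset : ∀ v₀, v₀ ∉ boundary →
      ∑ v ∈ G.neighborFinset v₀, f (α v₀ v) (Real.log (rt v) - Real.log (rt v₀)) = Real.pi)
    (hconvex : ∀ u v, G.Adj u v → Real.cos (α u v) ≤ r v / r u)
    (hconvext : ∀ u v, G.Adj u v → Real.cos (α u v) ≤ rt v / rt u) :
    ∀ v₀, v₀ ∉ boundary →
      0 ≤ ∑ v ∈ G.neighborFinset v₀,
        (Real.sin (α v₀ v) /
            (Real.cosh (Real.log (r v) - Real.log (r v₀)) - Real.cos (α v₀ v))) *
          (rt v / r v - rt v₀ / r v₀) := by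
  intro v₀ hv₀
  have hedge (v : V) (hv : v ∈ G.neighborFinset v₀) :=
    have hadj := (G.mem_neighborFinset v₀ v).1 hv
    two_mul_sub_le_kite_weight_mul (hα v₀ v hadj) (hf _ (hα v₀ v hadj)) (hr v) (hr v₀) (hrt v)
      (hrt v₀) (hconvex v₀ v hadj) (hconvext v₀ v hadj)
  calc (0 : ℝ)
      = 2 * (rt v₀ / r v₀) * (∑ v ∈ G.neighborFinset v₀,
          f (α v₀ v) (log (rt v) - log (rt v₀)) -
          ∑ v ∈ G.neighborFinset v₀, f (α v₀ v) (log (r v) - log (r v₀))) := by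
        rw [hclose v₀ hv₀, hcloset v₀ hv₀, sub_self, mul_zero]
    _ ≤ _ := by
      rw [← sum_sub_distrib, mul_sum]
      exact sum_le_sum hedge

/-- **subharmonicity of the radius ratio.**
Let `𝒞`, `𝒞̃` be two immersed circle patterns for the same finite graph `G` and admissible
labelling `α : E(G) → (0,π)` (so both radius functions satisfy the closing condition
`Σ f_α(log r(v) − log r(v₀)) = π` at interior vertices, where `f_θ' (x) =
sin θ/(2(cosh x − cos θ))`), with all kites convex (`r(v)/r(v₀) ≥ cos α` and likewise
for `r̃`).  Then `u = r̃/r` satisfies `Δu(v₀) ≥ 0` at every interior vertex, where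
`Δu(v₀) = Σ μ([v₀,v])(u(v) − u(v₀))` with
`μ([v₀,v]) = 2 f_α'(log r(v) − log r(v₀)) = sin α/(cosh(log r(v) − log r(v₀)) − cos α)`. -/
theorem radius_ratio_subharmonic
    {V : Type*} [Fintype V] (G : SimpleGraph V) [DecidableRel G.Adj]
    (boundary : Set V)
    (α : V → V → ℝ) (hαsymm : ∀ u v, α u v = α v u)
    (hα : ∀ u v, G.Adj u v → α u v ∈ Set.Ioo 0 Real.pi)
    (f : ℝ → ℝ → ℝ)
    (hf : ∀ θ ∈ Set.Ioo 0 Real.pi, ∀ x : ℝ,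
      HasDerivAt (f θ) (Real.sin θ / (2 * (Real.cosh x - Real.cos θ))) x)
    (r rt : V → ℝ) (hr : ∀ v, 0 < r v) (hrt : ∀ v, 0 < rt v)
    (hclose : ∀ v₀, v₀ ∉ boundary →
      ∑ v ∈ G.neighborFinset v₀, f (α v₀ v) (Real.log (r v) - Real.log (r v₀)) = Real.pi)
    (hcloset : ∀ v₀, v₀ ∉ boundary →
      ∑ v ∈ G.neighborFinset v₀, f (α v₀ v) (Real.log (rt v) - Real.log (rt v₀)) = Real.pi)
    (hconvex : ∀ u v, G.Adj u v → Real.cos (α u v) ≤ r v / r u)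
    (hconvext : ∀ u v, G.Adj u v → Real.cos (α u v) ≤ rt v / rt u) :
    ∀ v₀, v₀ ∉ boundary →
      0 ≤ ∑ v ∈ G.neighborFinset v₀,
        (Real.sin (α v₀ v) /
            (Real.cosh (Real.log (r v) - Real.log (r v₀)) - Real.cos (α v₀ v))) *
          (rt v / r v - rt v₀ / r v₀) :=
  radius_ratio_subharmonic_general G boundary α hα f hf r rt hr hrt hclose hcloset hconvex hconvext
end
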